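/- arXiv:1206.3620 — 6 statements merged into one kernel-verified Lean document; each statement's English description precedes it below -/
import Mathlib

section
/- Let H be a bialgebra over a commutative ring R and let x_1, …, x_k ∈ H be primitive elements. Then for every integer a ≥ 1, the symmetrized product Σ_{σ ∈ S_k} x_{σ(1)} x_{σ(2)} ⋯ x_{σ(k)} is an eigenvector of the a-th Hopf-power map Ψ^a with eigenvalue a^k; that is, Ψ^a(Σ_{σ ∈ S_k} x_{σ(1)} ⋯ x_{σ(k)}) = a^k · Σ_{σ ∈ S_k} x_{σ(1)} ⋯ x_{σ(k)}. -/
open TensorProduct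

/-!
Inclusion–exclusion over the subsets `T` of `{1, …, k}` gives the polarization identity
`∑_σ x_{σ 1} ⋯ x_{σ k} = ∑_T (-1)^{k - |T|} (∑_{i ∈ T} x_i)^k`: a word `x_{f 1} ⋯ x_{f k}`
survives with coefficient `1` exactly when `f` is onto, i.e. a permutation. Sums of primitive
elements are primitive, so it suffices to treat a power `y^n` of one primitive `y`. Since `1 ⊗ y`
and `y ⊗ 1` commute, `Δ(y^n) = ∑ C(n, m) y^{n-m} ⊗ y^m`, and induction on `a` together with the
binomial expansion of `(a + 1)^n` gives `Ψ^a(y^n) = a^n y^n`.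
-/

/-- The `a`-th Hopf-power map `Ψ^a = m^{[a]} ∘ Δ^{[a]}`, defined by the convolution
recursion `Ψ^0 = unit ∘ counit`, `Ψ^{a+1} = m ∘ (id ⊗ Ψ^a) ∘ Δ`. -/
noncomputable def hopfPower (R H : Type*) [CommRing R] [Ring H] [Bialgebra R H] :
    ℕ → (H →ₗ[R] H)
  | 0 => (Algebra.linearMap R H) ∘ₗ (Coalgebra.counit)
  | (a + 1) =>
      (LinearMap.mul' R H) ∘ₗ
        (TensorProduct.map LinearMap.id (hopfPower R H a)) ∘ₗ (Coalgebra.comul)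

open Finset

section Polarization

variable {M ι : Type*}

theorem sum_superset_neg_one_pow_card_compl [Fintype ι] [DecidableEq ι] (S : Finset ι) :
    ∑ T : Finset ι, (if S ⊆ T then (-1 : ℤ) ^ #Tᶜ else 0) = if S = univ then 1 else 0 := by
  calc ∑ T : Finset ι, (if S ⊆ T then (-1 : ℤ) ^ #Tᶜ else 0)
      = ∑ U : Finset ι, (if U ⊆ Sᶜ then (-1 : ℤ) ^ #U else 0) :=
        Fintype.sum_equiv (compl_involutive.toPerm _) _ _ fun T => by simp
    _ = ∑ U ∈ Sᶜ.powerset, (-1 : ℤ) ^ #U := by rw [← sum_filter]; congr; ext; simp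
    _ = if S = univ then 1 else 0 := by simp [sum_powerset_neg_one_pow_card]

theorem sum_pow_eq_sum_prod_ofFn [Semiring M] [Fintype ι] (y : ι → M) (n : ℕ) :
    (∑ i, y i) ^ n = ∑ f : Fin n → ι, (List.ofFn fun j => y (f j)).prod := by
  induction n with
  | zero => simp
  | succ n ih =>
    rw [pow_succ', ih, sum_mul_sum, ← Fintype.sum_prod_type',
      ← (Fin.consEquiv fun _ => ι).sum_comp]
    simp [List.ofFn_succ, Fin.consEquiv]

theorem List.prod_ofFn_ite [MonoidWithZero M] {n : ℕ} (p : Fin n → Prop) [DecidablePred p]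
    (y : Fin n → M) :
    (List.ofFn fun j => if p j then y j else 0).prod =
      if ∀ j, p j then (List.ofFn y).prod else 0 := by
  split_ifs with h
  · simp [h]
  · obtain ⟨j, hj⟩ := not_forall.mp h
    exact List.prod_eq_zero (List.mem_ofFn.mpr ⟨j, by simp [hj]⟩)


theorem sum_perm_prod_ofFn_eq_sum_neg_one_pow [Ring M] {k : ℕ} (x : Fin k → M) :
    ∑ σ : Equiv.Perm (Fin k), (List.ofFn fun i => x (σ i)).prod =
      ∑ T : Finset (Fin k), (-1 : ℤ) ^ #Tᶜ • (∑ i ∈ T, x i) ^ k := by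
  classical
  set P : (Fin k → Fin k) → M := fun f => (List.ofFn fun j => x (f j)).prod
  have expand (T : Finset (Fin k)) :
      (∑ i ∈ T, x i) ^ k = ∑ f, if image f univ ⊆ T then P f else 0 := by
    simp [← sum_ite_mem_eq, sum_pow_eq_sum_prod_ofFn, List.prod_ofFn_ite, image_subset_iff, P]
  symm
  calc ∑ T : Finset (Fin k), (-1 : ℤ) ^ #Tᶜ • (∑ i ∈ T, x i) ^ k
      = ∑ f, (∑ T : Finset (Fin k), if image f univ ⊆ T then (-1 : ℤ) ^ #Tᶜ else 0) • P f := by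
        simp_rw [expand, smul_sum, sum_smul, ite_smul, smul_ite, smul_zero, zero_smul]
        exact sum_comm
    _ = ∑ f with Function.Surjective f, P f := by
        rw [sum_filter]
        refine sum_congr rfl fun f _ => ?_
        rw [sum_superset_neg_one_pow_card_compl, ite_smul, one_smul, zero_smul]
        exact if_congr (by simp [eq_univ_iff_forall, Function.Surjective]) rfl rfl
    _ = ∑ σ : Equiv.Perm (Fin k), P σ := by
        refine (sum_nbij (fun σ : Equiv.Perm (Fin k) => (σ : Fin k → Fin k))
          (fun σ _ => by simpa using σ.surjective) DFunLike.coe_injective.injOn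
          (fun f hf => ?_) fun _ _ => rfl).symm
        exact ⟨Equiv.ofBijective f (mem_filter.mp hf).2.bijective_of_finite, mem_univ _, rfl⟩

end Polarization

section Primitives

variable (R H : Type*) [CommSemiring R] [Semiring H] [Bialgebra R H]

def primitives : Submodule R H where
  carrier := {y | Coalgebra.comul (R := R) y = 1 ⊗ₜ[R] y + y ⊗ₜ[R] 1}
  add_mem' {y z} (hy : _ = _) (hz : _ = _) := by
    change Coalgebra.comul (y + z) = _
    rw [map_add, hy, hz, tmul_add, add_tmul]
    abel
  zero_mem' := by simp
  smul_mem' c y (hy : _ = _) := by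
    change Coalgebra.comul (c • y) = _
    rw [map_smul, hy, smul_add, ← tmul_smul, smul_tmul']

variable {R H}

theorem mem_primitives {y : H} :
    y ∈ primitives R H ↔ Coalgebra.comul (R := R) y = 1 ⊗ₜ[R] y + y ⊗ₜ[R] 1 := Iff.rfl

theorem comul_pow_of_mem_primitives {y : H} (hy : y ∈ primitives R H) (n : ℕ) :
    Coalgebra.comul (R := R) (y ^ n) =
      ∑ p ∈ antidiagonal n, n.choose p.1 • ((y ^ p.2) ⊗ₜ[R] (y ^ p.1)) := by
  have hcomm : Commute ((1 : H) ⊗ₜ[R] y) (y ⊗ₜ[R] 1) := by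
    simp [Commute, SemiconjBy, Algebra.TensorProduct.tmul_mul_tmul]
  rw [Bialgebra.comul_pow, mem_primitives.mp hy, hcomm.add_pow']
  simp [Algebra.TensorProduct.tmul_pow, Algebra.TensorProduct.tmul_mul_tmul]

end Primitives

section HopfPower

variable {R H : Type*} [CommRing R] [Ring H] [Bialgebra R H]

theorem counit_eq_zero_of_mem_primitives {y : H} (hy : y ∈ primitives R H) :
    Coalgebra.counit (R := R) y = 0 := by
  have h := Coalgebra.rTensor_counit_comul (R := R) y
  rw [mem_primitives.mp hy, map_add, LinearMap.rTensor_tmul, LinearMap.rTensor_tmul,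
    Bialgebra.counit_one, add_eq_left] at h
  simpa using congr(Coalgebra.counit (R := R) (TensorProduct.lid R H $h))

theorem hopfPower_pow_of_mem_primitives {y : H} (hy : y ∈ primitives R H) (a n : ℕ) :
    hopfPower R H a (y ^ n) = (a ^ n : ℕ) • y ^ n := by
  induction a generalizing n with
  | zero =>
    cases n <;> simp [hopfPower, counit_eq_zero_of_mem_primitives hy]
  | succ a ih =>
    rw [hopfPower, LinearMap.comp_apply, LinearMap.comp_apply, comul_pow_of_mem_primitives hy]
    simp only [map_sum, map_nsmul, map_tmul, LinearMap.id_apply, ih, tmul_smul,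
      LinearMap.mul'_apply, ← pow_add]
    rw [(Commute.all a 1).add_pow', sum_smul]
    refine sum_congr rfl fun p hp => ?_
    rw [add_comm p.2, mem_antidiagonal.mp hp, one_pow, mul_one, smul_assoc]

end HopfPower

theorem hopfPower_symmetrized_product_eigenvector_general
    {R H : Type*} [CommRing R] [Ring H] [Bialgebra R H]
    (k : ℕ) (x : Fin k → H)
    (hx : ∀ i, Coalgebra.comul (R := R) (x i) = 1 ⊗ₜ[R] x i + x i ⊗ₜ[R] 1)
    (a : ℕ) :
    hopfPower R H a (∑ σ : Equiv.Perm (Fin k), (List.ofFn fun i => x (σ i)).prod) =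
      (a ^ k : ℕ) • ∑ σ : Equiv.Perm (Fin k), (List.ofFn fun i => x (σ i)).prod := by
  have hsum (T : Finset (Fin k)) : ∑ i ∈ T, x i ∈ primitives R H :=
    Submodule.sum_mem _ fun i _ => hx i
  rw [sum_perm_prod_ofFn_eq_sum_neg_one_pow, map_sum, smul_sum]
  refine sum_congr rfl fun T _ => ?_
  rw [map_zsmul, hopfPower_pow_of_mem_primitives (hsum T), smul_comm]

/-- The symmetrized product of primitive elements is an eigenvector of the `a`-th
Hopf-power map with eigenvalue `a^k`. -/
theorem hopfPower_symmetrized_product_eigenvector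
    {R H : Type*} [CommRing R] [Ring H] [Bialgebra R H]
    (k : ℕ) (x : Fin k → H)
    (hx : ∀ i, Coalgebra.comul (R := R) (x i) = 1 ⊗ₜ[R] x i + x i ⊗ₜ[R] 1)
    (a : ℕ) (ha : 1 ≤ a) :
    hopfPower R H a (∑ σ : Equiv.Perm (Fin k), (List.ofFn fun i => x (σ i)).prod) =
      (a ^ k : ℕ) • ∑ σ : Equiv.Perm (Fin k), (List.ofFn fun i => x (σ i)).prod :=
  hopfPower_symmetrized_product_eigenvector_general k x hx a
end

section
/- For every n ≥ 1, the rock-breaking transition matrix P_n, viewed as a matrix over ℚ indexed by the partitions of n, is diagonalizable, and its characteristic polynomial equals ∏_{l=1}^{n} (X − 2^{l−n})^{p(n,l)}, where p(n,l) is the number of partitions of n into exactly l parts. In particular the eigenvalues of P_n are exactly 1, 1/2, 1/4, …, 1/2^{n−1}, and the multiplicity of the eigenvalue 2^{l−n} is the number of partitions of n into l parts. -/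
open scoped Classical

/-- One step of the rock-breaking chain: each part of `lam` is broken by an independent
symmetric binomial split, and empty pieces are discarded. -/
noncomputable def rockP (n : ℕ) (lam mu : Nat.Partition n) : ℚ :=
  ((2 : ℚ) ^ n)⁻¹ *
    ∑ s : ((j : Fin lam.parts.toList.length) → Fin (lam.parts.toList.get j + 1)),
      if ((↑(List.ofFn fun j => (s j : ℕ)) +
            ↑(List.ofFn fun j => lam.parts.toList.get j - (s j : ℕ)) : Multiset ℕ).filter
            (fun x => x ≠ 0)) = mu.parts
      then ∏ j, ((lam.parts.toList.get j).choose (s j) : ℚ)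
      else 0

/-- The rock-breaking transition matrix on partitions of `n`. -/
noncomputable def rockMatrix (n : ℕ) : Matrix (Nat.Partition n) (Nat.Partition n) ℚ :=
  Matrix.of fun lam mu => rockP n lam mu

/-!
Order the partitions of `n` by their number of parts. A split never decreases the number of
parts, and it keeps it only when every rock stays whole: for a rock of size `a` these are the
two splits `0 + a` and `a + 0`, each of binomial weight `1`. Hence `P_n` is block upper
triangular and its diagonal block on the partitions with `l` parts is the scalar `2^l / 2^n`.
This gives the characteristic polynomial, and since these scalars are distinct,
`∏_{l ≤ n} (P_n - 2^{l-n})` vanishes: the minimal polynomial has simple rational roots, so `P_n`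
is diagonalizable over `ℚ`.
-/

open Finset Polynomial Module End Matrix

section Diagonalizable

variable {K V : Type*} [Field K] [AddCommGroup V] [Module K V]

theorem Module.End.ker_aeval_prod_X_sub_C (f : End K V) (s : Finset K) :
    LinearMap.ker (aeval f (∏ c ∈ s, (X - C c))) = ⨆ c ∈ s, f.eigenspace c := by
  induction s using Finset.induction_on with
  | empty => simp [Module.End.one_eq_id]
  | insert a s ha ih =>
    have hcop : IsCoprime (X - C a) (∏ c ∈ s, (X - C c)) :=
      IsCoprime.prod_right fun c hc =>
        isCoprime_X_sub_C_of_isUnit_sub (sub_ne_zero_of_ne fun hac : a = c => ha (hac ▸ hc)).isUnit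
    rw [Finset.prod_insert ha, ← sup_ker_aeval_eq_ker_aeval_mul_of_coprime f hcop, ih,
      Finset.iSup_insert, eigenspace_def, map_sub, aeval_X, aeval_C,
      Algebra.algebraMap_eq_smul_one]

theorem Module.End.iSup_eigenspace_eq_top_of_aeval_prod_X_sub_C_eq_zero (f : End K V)
    (s : Finset K) (h : aeval f (∏ c ∈ s, (X - C c)) = 0) : ⨆ μ, f.eigenspace μ = ⊤ := by
  refine top_unique ?_
  calc ⊤ = LinearMap.ker (aeval f (∏ c ∈ s, (X - C c))) := by rw [h, LinearMap.ker_zero]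
    _ = ⨆ c ∈ s, f.eigenspace c := f.ker_aeval_prod_X_sub_C s
    _ ≤ ⨆ μ, f.eigenspace μ := iSup₂_le fun c _ => le_iSup f.eigenspace c

theorem Matrix.exists_eq_mul_diagonal_mul_inv_of_iSup_eigenspace_eq_top {ι : Type*} [Fintype ι]
    [DecidableEq ι] (A : Matrix ι ι K) (h : ⨆ μ, eigenspace (toLin' A) μ = ⊤) :
    ∃ (P : Matrix ι ι K) (d : ι → K), IsUnit P.det ∧ A = P * diagonal d * P⁻¹ := by
  set f : End K (ι → K) := toLin' A
  have hf : DirectSum.IsInternal f.eigenspace :=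
    (DirectSum.isInternal_submodule_iff_iSupIndep_and_iSup_eq_top _).mpr
      ⟨f.eigenspaces_iSupIndep, h⟩
  let v := fun μ => Module.finBasis K (f.eigenspace μ)
  let e := (hf.collectedBasis v).indexEquiv (Pi.basisFun K ι)
  let b := (hf.collectedBasis v).reindex e
  let d : ι → K := fun i => (e.symm i).1
  have hb (i : ι) : f (b i) = d i • b i := by
    rw [(hf.collectedBasis v).reindex_apply]
    exact mem_eigenspace_iff.mp (hf.collectedBasis_mem v (e.symm i))
  have hD : LinearMap.toMatrix b b f = diagonal d := by
    ext i j
    rw [LinearMap.toMatrix_apply, hb j, map_smul, Basis.repr_self, Finsupp.smul_single_one,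
      Finsupp.single_apply, diagonal_apply]
    grind
  let pb := Pi.basisFun K ι
  have hPQ : pb.toMatrix b * b.toMatrix pb = 1 := pb.toMatrix_mul_toMatrix_flip b
  refine ⟨pb.toMatrix b, d, isUnit_det_of_right_inverse hPQ, ?_⟩
  rw [inv_eq_right_inv hPQ, ← hD, basis_toMatrix_mul_linearMap_toMatrix_mul_basis_toMatrix,
    LinearMap.toMatrix_eq_toMatrix', LinearMap.toMatrix'_toLin']

theorem Matrix.exists_eq_mul_diagonal_mul_inv_of_aeval_prod_X_sub_C_eq_zero {ι : Type*}
    [Fintype ι] [DecidableEq ι] (A : Matrix ι ι K) (s : Finset K)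
    (h : aeval A (∏ c ∈ s, (X - C c)) = 0) :
    ∃ (P : Matrix ι ι K) (d : ι → K), IsUnit P.det ∧ A = P * diagonal d * P⁻¹ := by
  refine A.exists_eq_mul_diagonal_mul_inv_of_iSup_eigenspace_eq_top
    (Module.End.iSup_eigenspace_eq_top_of_aeval_prod_X_sub_C_eq_zero (toLin' A) s ?_)
  exact (aeval_algHom_apply toLinAlgEquiv' A _).trans (by rw [h, map_zero])

end Diagonalizable

section ScalarBlocks

variable {ι R : Type*} [DecidableEq ι] [CommRing R]

def Matrix.IsScalarBlockTriangular (M : Matrix ι ι R) (b : ι → ℕ) (c : ℕ → R) : Prop :=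
  ∀ i j, b j ≤ b i → M i j = if i = j then c (b i) else 0

variable {M : Matrix ι ι R} {b : ι → ℕ} {c : ℕ → R}

namespace Matrix.IsScalarBlockTriangular

theorem blockTriangular (hM : M.IsScalarBlockTriangular b c) : M.BlockTriangular b :=
  fun i j hji => by rw [hM i j hji.le, if_neg (fun hij => (hij ▸ hji).false)]

theorem toSquareBlock_eq (hM : M.IsScalarBlockTriangular b c) (a : ℕ) :
    M.toSquareBlock b a = diagonal fun _ => c a := by
  ext ⟨i, hi⟩ ⟨j, hj⟩
  rw [toSquareBlock_def, of_apply, hM i j (hi.trans hj.symm).ge, diagonal_apply]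
  simp only [Subtype.mk.injEq, hi]

variable [Fintype ι]

theorem charpoly_eq_prod (hM : M.IsScalarBlockTriangular b c) {t : Finset ℕ}
    (ht : ∀ i, b i ∈ t) : M.charpoly = ∏ a ∈ t, (X - C (c a)) ^ #{i | b i = a} := by
  rw [hM.blockTriangular.charpoly]
  refine prod_subset_one_on_sdiff (image_subset_iff.mpr fun i _ => ht i) ?_ fun a _ => ?_
  · intro a ha
    have hempty : #{i | b i = a} = 0 := card_eq_zero.mpr <| filter_eq_empty_iff.mpr
      fun i _ hi => (mem_sdiff.mp ha).2 (hi ▸ mem_image_of_mem b (mem_univ i))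
    rw [hempty, pow_zero]
  · rw [hM.toSquareBlock_eq, charpoly_diagonal, prod_const, card_univ, Fintype.card_subtype]

theorem aeval_prod_range_apply (hM : M.IsScalarBlockTriangular b c) (m : ℕ) (i j : ι)
    (hj : b j < m) : aeval M (∏ k ∈ range m, (X - C (c k))) i j = 0 := by
  induction m generalizing j with
  | zero => exact absurd hj (Nat.not_lt_zero _)
  | succ m ih =>
    rw [prod_range_succ, map_mul, mul_apply]
    refine sum_eq_zero fun l _ => ?_
    rcases lt_or_ge (b l) m with hl | hl
    · rw [ih l hl, zero_mul]
    · have hjl : b j ≤ b l := by omega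
      rw [map_sub, aeval_X, aeval_C, sub_apply, hM l j hjl, algebraMap_matrix_apply]
      split_ifs with hlj
      · subst hlj
        rw [show b l = m by omega, Algebra.algebraMap_self, RingHom.id_apply, sub_self, mul_zero]
      · rw [sub_zero, mul_zero]

theorem aeval_prod_range_eq_zero (hM : M.IsScalarBlockTriangular b c) {m : ℕ}
    (hb : ∀ i, b i < m) : aeval M (∏ k ∈ range m, (X - C (c k))) = 0 :=
  ext fun i j => hM.aeval_prod_range_apply m i j (hb j)

end Matrix.IsScalarBlockTriangular

end ScalarBlocks

theorem Nat.Partition.card_parts_mem_Icc {n : ℕ} (hn : 1 ≤ n) (lam : n.Partition) :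
    Multiset.card lam.parts ∈ Icc 1 n := by
  have hle := Multiset.card_nsmul_le_sum (s := lam.parts) (a := 1) fun _ hx => lam.parts_pos hx
  rw [lam.parts_sum, smul_eq_mul, mul_one] at hle
  refine mem_Icc.mpr ⟨Multiset.card_pos.mpr fun h => ?_, hle⟩
  have := lam.parts_sum
  rw [h, Multiset.sum_zero] at this
  omega

namespace RockBreaking

def pieces (a v : ℕ) : Multiset ℕ := ({v} + {a - v} : Multiset ℕ).filter (· ≠ 0)

theorem pieces_eq_singleton {a v : ℕ} (ha : a ≠ 0) (hv : v = 0 ∨ v = a) : pieces a v = {a} := by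
  rcases hv with rfl | rfl <;> simp [pieces, Multiset.filter_singleton, ha]

theorem card_pieces {a v : ℕ} (ha : a ≠ 0) (hv : v ≤ a) :
    Multiset.card (pieces a v) = if v = 0 ∨ v = a then 1 else 2 := by
  split_ifs with h
  · rw [pieces_eq_singleton ha h, Multiset.card_singleton]
  · push Not at h
    simp [pieces, Multiset.filter_singleton, h.1, Nat.sub_ne_zero_of_lt (lt_of_le_of_ne hv h.2)]

variable {n : ℕ} (lam : Nat.Partition n)

abbrev Split := (j : Fin lam.parts.toList.length) → Fin (lam.parts.toList.get j + 1)

noncomputable def splitResult (s : Split lam) : Multiset ℕ :=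
  ((↑(List.ofFn fun j => (s j : ℕ)) +
      ↑(List.ofFn fun j => lam.parts.toList.get j - (s j : ℕ)) : Multiset ℕ).filter
      (fun x => x ≠ 0))

theorem rockP_eq (mu : Nat.Partition n) :
    rockP n lam mu = ((2 : ℚ) ^ n)⁻¹ * ∑ s : Split lam,
      if splitResult lam s = mu.parts then ∏ j, ((lam.parts.toList.get j).choose (s j) : ℚ)
      else 0 := rfl

noncomputable def trivialSplits : Finset (Split lam) := Fintype.piFinset fun _ => {0, Fin.last _}

variable {lam}

theorem get_parts_ne_zero (j : Fin lam.parts.toList.length) : lam.parts.toList.get j ≠ 0 :=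
  (lam.parts_pos (Multiset.mem_toList.mp (List.get_mem _ j))).ne'

theorem splitResult_eq_bind (s : Split lam) :
    splitResult lam s = univ.val.bind fun j => pieces (lam.parts.toList.get j) (s j) := by
  rw [splitResult, ← Fin.univ_val_map, ← Fin.univ_val_map, ← Multiset.bind_singleton,
    ← Multiset.bind_singleton, ← Multiset.bind_add, Multiset.filter_bind]
  rfl

theorem card_splitResult (s : Split lam) :
    Multiset.card (splitResult lam s) =
      ∑ j, Multiset.card (pieces (lam.parts.toList.get j) (s j)) := by
  rw [splitResult_eq_bind, Multiset.card_bind, Finset.sum_eq_multiset_sum]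
  rfl

theorem mem_trivialSplits_iff {s : Split lam} :
    s ∈ trivialSplits lam ↔ ∀ j, (s j : ℕ) = 0 ∨ (s j : ℕ) = lam.parts.toList.get j := by
  simp only [trivialSplits, Fintype.mem_piFinset, mem_insert, mem_singleton, Fin.ext_iff,
    Fin.val_zero, Fin.val_last]

theorem card_trivialSplits : #(trivialSplits lam) = 2 ^ Multiset.card lam.parts := by
  have h2 (j : Fin lam.parts.toList.length) :
      #({0, Fin.last _} : Finset (Fin (lam.parts.toList.get j + 1))) = 2 :=
    card_pair (by simpa [Fin.ext_iff] using (get_parts_ne_zero j).symm)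
  rw [trivialSplits, Fintype.card_piFinset, prod_congr rfl fun j _ => h2 j, prod_const, card_univ,
    Fintype.card_fin, Multiset.length_toList]

theorem splitResult_of_mem_trivialSplits {s : Split lam} (hs : s ∈ trivialSplits lam) :
    splitResult lam s = lam.parts := by
  have h j : pieces (lam.parts.toList.get j) (s j) = {lam.parts.toList.get j} :=
    pieces_eq_singleton (get_parts_ne_zero j) (mem_trivialSplits_iff.mp hs j)
  simp only [splitResult_eq_bind, h, Multiset.bind_singleton, Fin.univ_val_map, List.ofFn_get,
    Multiset.coe_toList]

theorem mem_trivialSplits_of_card_splitResult_le {s : Split lam}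
    (h : Multiset.card (splitResult lam s) ≤ Multiset.card lam.parts) : s ∈ trivialSplits lam := by
  have hcard j := card_pieces (get_parts_ne_zero j) (s j).is_le
  have hle : ∀ j ∈ univ, 1 ≤ Multiset.card (pieces (lam.parts.toList.get j) (s j)) :=
    fun j _ => by rw [hcard j]; split_ifs <;> norm_num
  have hsum : ∑ j, Multiset.card (pieces (lam.parts.toList.get j) (s j)) ≤
      ∑ _j : Fin lam.parts.toList.length, 1 := by
    rwa [← card_splitResult, sum_const, card_univ, Fintype.card_fin, smul_eq_mul, mul_one,
      Multiset.length_toList]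
  have hone := (sum_eq_sum_iff_of_le hle).mp (le_antisymm (sum_le_sum hle) hsum)
  refine mem_trivialSplits_iff.mpr fun j => ?_
  by_contra hj
  have h12 := hone j (mem_univ j)
  rw [hcard j, if_neg hj] at h12
  omega

theorem prod_choose_of_mem_trivialSplits {s : Split lam} (hs : s ∈ trivialSplits lam) :
    ∏ j, ((lam.parts.toList.get j).choose (s j) : ℚ) = 1 := by
  refine prod_eq_one fun j _ => ?_
  rcases mem_trivialSplits_iff.mp hs j with h | h <;> simp [h]

end RockBreaking

open RockBreaking in
theorem rockMatrix_isScalarBlockTriangular (n : ℕ) :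
    (rockMatrix n).IsScalarBlockTriangular (fun lam => Multiset.card lam.parts)
      (fun l => (2 : ℚ) ^ ((l : ℤ) - n)) := by
  intro lam mu h
  dsimp only at h ⊢
  have hsplit (s : Split lam) (hs : splitResult lam s = mu.parts) : s ∈ trivialSplits lam :=
    mem_trivialSplits_of_card_splitResult_le (hs ▸ h)
  rw [rockMatrix, Matrix.of_apply, rockP_eq]
  split_ifs with hlm
  · subst hlm
    have hterm (s : Split lam) : (if splitResult lam s = lam.parts then
        ∏ j, ((lam.parts.toList.get j).choose (s j) : ℚ) else 0) =
        if s ∈ trivialSplits lam then 1 else 0 := by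
      by_cases hs : s ∈ trivialSplits lam
      · rw [if_pos (splitResult_of_mem_trivialSplits hs), if_pos hs,
          prod_choose_of_mem_trivialSplits hs]
      · rw [if_neg (mt (hsplit s) hs), if_neg hs]
    rw [sum_congr rfl fun s _ => hterm s, sum_boole, filter_mem_eq_inter, univ_inter,
      card_trivialSplits, Nat.cast_pow, Nat.cast_ofNat, zpow_sub₀ two_ne_zero, zpow_natCast,
      zpow_natCast, div_eq_inv_mul]
  · refine mul_eq_zero_of_right _ (sum_eq_zero fun s _ => if_neg fun hs => hlm ?_)
    exact Nat.Partition.ext ((splitResult_of_mem_trivialSplits (hsplit s hs)).symm.trans hs)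

/-- The rock-breaking transition matrix is diagonalizable over `ℚ` and its
characteristic polynomial is `∏_{l=1}^{n} (X - 2^{l-n})^{p(n,l)}`, where `p(n,l)` is
the number of partitions of `n` into exactly `l` parts. -/
theorem rockBreaking_diagonalizable_charpoly (n : ℕ) (hn : 1 ≤ n) :
    (∃ (P : Matrix (Nat.Partition n) (Nat.Partition n) ℚ) (d : Nat.Partition n → ℚ),
      IsUnit P.det ∧ rockMatrix n = P * Matrix.diagonal d * P⁻¹) ∧
    (rockMatrix n).charpoly =
      ∏ l ∈ Finset.Icc 1 n,
        (Polynomial.X - Polynomial.C ((2 : ℚ) ^ ((l : ℤ) - (n : ℤ)))) ^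
          (Finset.univ.filter
            (fun lam : Nat.Partition n => Multiset.card lam.parts = l)).card := by
  set c : ℕ → ℚ := fun l => (2 : ℚ) ^ ((l : ℤ) - (n : ℤ))
  have hM := rockMatrix_isScalarBlockTriangular n
  have hc : Function.Injective c := fun a b hab => by
    have := zpow_right_injective₀ (by norm_num : (0 : ℚ) < 2) (by norm_num) hab
    omega
  have hcard lam := Nat.Partition.card_parts_mem_Icc hn lam
  refine ⟨(rockMatrix n).exists_eq_mul_diagonal_mul_inv_of_aeval_prod_X_sub_C_eq_zero
    ((range (n + 1)).image c) ?_, hM.charpoly_eq_prod hcard⟩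
  rw [prod_image hc.injOn]
  exact hM.aeval_prod_range_eq_zero fun lam => Nat.lt_succ_of_le (mem_Icc.mp (hcard lam)).2
end

section
/- Fix n ≥ 1 and an integer r with 1 ≤ r. The function f(λ) = Σ_{j=1}^{l(λ)} C(λ_j, r), defined on partitions λ of n, is a right eigenfunction of the rock-breaking chain with eigenvalue 2^{1−r}: for every partition λ of n, Σ_μ P_n(λ, μ) Σ_{j=1}^{l(μ)} C(μ_j, r) = 2^{1−r} · Σ_{j=1}^{l(λ)} C(λ_j, r). -/
/-!
Applying the chain to `f` averages, over independent splits `s_j ~ Bin(λ_j, 1/2)`, the quantity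
`∑_j (C(s_j, r) + C(λ_j - s_j, r))`; empty pieces may be kept since `C(0, r) = 0` for `r ≥ 1`.
By linearity of expectation this is a sum of one-part means, and the identity
`∑_t C(m, t) C(t, r) = C(m, r) 2^(m-r)` together with the symmetry `t ↦ m - t` makes the mean
for a part of size `m` equal to `2 C(m, r) 2^(m-r) / 2^m = 2^(1-r) C(m, r)`.
-/

open scoped Classical

open Finset

theorem Nat.sum_range_choose_mul_choose (m r : ℕ) :
    ∑ t ∈ range (m + 1), m.choose t * t.choose r = m.choose r * 2 ^ (m - r) := by
  rcases lt_or_ge m r with hmr | hrm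
  · rw [Nat.choose_eq_zero_of_lt hmr, zero_mul]
    refine sum_eq_zero fun t ht => ?_
    rw [Nat.choose_eq_zero_of_lt (show t < r by rw [mem_range] at ht; omega), mul_zero]
  · have hsplit : m + 1 = r + (m - r + 1) := by omega
    rw [hsplit, sum_range_add, ← Nat.sum_range_choose (m - r), mul_sum, add_eq_right.mpr]
    · refine sum_congr rfl fun i hi => ?_
      rw [Nat.choose_mul (le_add_right r i), Nat.add_sub_cancel_left]
    · refine sum_eq_zero fun t ht => ?_
      rw [Nat.choose_eq_zero_of_lt (mem_range.mp ht), mul_zero]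

theorem sum_choose_mul_choose_add_choose_sub_div (m r : ℕ) :
    (∑ t : Fin (m + 1), (m.choose t : ℚ) * ((t : ℕ).choose r + (m - t).choose r)) / 2 ^ m =
      2 ^ ((1 : ℤ) - r) * m.choose r := by
  have hreflect : ∑ t ∈ range (m + 1), m.choose t * (m - t).choose r =
      ∑ t ∈ range (m + 1), m.choose t * t.choose r := by
    rw [← sum_range_reflect]
    refine sum_congr rfl fun t ht => ?_
    rw [mem_range] at ht
    rw [Nat.add_sub_cancel, Nat.sub_sub_self (by omega), Nat.choose_symm (by omega)]
  have hsum : ∑ t ∈ range (m + 1), (m.choose t : ℚ) * (t.choose r + (m - t).choose r) =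
      2 * (m.choose r * 2 ^ (m - r)) := by
    have hsumN : ∑ t ∈ range (m + 1), m.choose t * (t.choose r + (m - t).choose r) =
        2 * (m.choose r * 2 ^ (m - r)) := by
      rw [← Nat.sum_range_choose_mul_choose, two_mul]
      simp only [mul_add, sum_add_distrib, hreflect]
    exact_mod_cast hsumN
  rw [Fin.sum_univ_eq_sum_range (fun t => (m.choose t : ℚ) * (t.choose r + (m - t).choose r)),
    hsum, zpow_sub₀ two_ne_zero, zpow_one, zpow_natCast]
  rcases lt_or_ge m r with hmr | hrm
  · simp [Nat.choose_eq_zero_of_lt hmr]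
  · rw [← Nat.sub_add_cancel hrm, pow_add, Nat.add_sub_cancel]
    field_simp

theorem Fintype.sum_prod_mul_sum {ι K : Type*} [Fintype ι] [DecidableEq ι] [Field K]
    {κ : ι → Type*} [∀ i, Fintype (κ i)] (w g : ∀ i, κ i → K) (hw : ∀ i, ∑ t, w i t ≠ 0) :
    ∑ x : ∀ i, κ i, (∏ i, w i (x i)) * ∑ j, g j (x j) =
      (∏ i, ∑ t, w i t) * ∑ j, (∑ t, w j t * g j t) / ∑ t, w j t := by
  simp_rw [mul_sum]
  rw [sum_comm]
  refine Finset.sum_congr rfl fun j _ => ?_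
  have hfactor : ∀ x : ∀ i, κ i, (∏ i, w i (x i)) * g j (x j) =
      ∏ i, w i (x i) * if i = j then g i (x i) else 1 := fun x => by
    rw [Finset.prod_mul_distrib, Finset.prod_ite_eq' univ j, if_pos (mem_univ j)]
  rw [Finset.sum_congr rfl fun x _ => hfactor x,
    ← Fintype.prod_sum fun i t => w i t * if i = j then g i t else 1,
    ← Finset.mul_prod_erase univ _ (mem_univ j)]
  simp only [↓reduceIte]
  have herase : ∀ i ∈ univ.erase j, ∑ t, w i t * (if i = j then g i t else 1) = ∑ t, w i t :=
    fun i hi => by simp only [if_neg (ne_of_mem_erase hi), mul_one]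
  rw [Finset.prod_congr rfl herase,
    ← Finset.mul_prod_erase univ (fun i => ∑ t, w i t) (mem_univ j)]
  field_simp [hw j]

theorem Multiset.sum_map_filter_ne_zero {α M : Type*} [Zero α] [DecidableEq α]
    [AddCommMonoid M] (s : Multiset α) {f : α → M} (hf : f 0 = 0) :
    ((s.filter (· ≠ 0)).map f).sum = (s.map f).sum := by
  conv_rhs => rw [← Multiset.filter_add_not (· ≠ 0) s]
  have hzeros : ((s.filter fun a => ¬a ≠ 0).map f).sum = 0 := by
    refine Multiset.sum_eq_zero fun y hy => ?_
    obtain ⟨x, hx, rfl⟩ := Multiset.mem_map.mp hy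
    rw [Multiset.mem_filter, not_not] at hx
    rw [hx.2, hf]
  rw [Multiset.map_add, Multiset.sum_add, hzeros, add_zero]

theorem Multiset.sum_map_eq_sum_toList_get {α M : Type*} [AddCommMonoid M] (s : Multiset α)
    (f : α → M) : (s.map f).sum = ∑ j : Fin s.toList.length, f (s.toList.get j) := by
  rw [← Multiset.sum_map_toList, ← Fin.sum_univ_fun_getElem]
  rfl

theorem Nat.Partition.sum_ite_parts_eq {M : Type*} [AddCommMonoid M] {n : ℕ} {P : Multiset ℕ}
    (hpos : ∀ i ∈ P, 0 < i) (hsum : P.sum = n) (g : Multiset ℕ → M) :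
    ∑ mu : Nat.Partition n, (if P = mu.parts then g mu.parts else 0) = g P := by
  rw [Fintype.sum_eq_single ⟨P, hpos _, hsum⟩ fun mu hmu => if_neg fun h =>
    hmu (Nat.Partition.ext h.symm)]
  exact if_pos rfl

/-- Both pieces of every part of `l` under the split `s`, empty pieces included. -/
def splitPieces {l : List ℕ} (s : (j : Fin l.length) → Fin (l.get j + 1)) : Multiset ℕ :=
  ↑(List.ofFn fun j => (s j : ℕ)) + ↑(List.ofFn fun j => l.get j - (s j : ℕ))

theorem sum_map_splitPieces {M : Type*} [AddCommMonoid M] {l : List ℕ}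
    (s : (j : Fin l.length) → Fin (l.get j + 1)) (f : ℕ → M) :
    ((splitPieces s).map f).sum = ∑ j, (f (s j) + f (l.get j - s j)) := by
  rw [splitPieces, Multiset.map_add, Multiset.sum_add, Multiset.map_coe, Multiset.map_coe,
    Multiset.sum_coe, Multiset.sum_coe, List.map_ofFn, List.map_ofFn, List.sum_ofFn,
    List.sum_ofFn, ← sum_add_distrib]
  rfl

theorem sum_splitPieces {l : List ℕ} (s : (j : Fin l.length) → Fin (l.get j + 1)) :
    (splitPieces s).sum = l.sum := by
  rw [← Multiset.map_id (splitPieces s), sum_map_splitPieces]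
  conv_rhs => rw [← List.ofFn_get l, List.sum_ofFn]
  exact sum_congr rfl fun j _ => Nat.add_sub_cancel' (Nat.lt_succ_iff.mp (s j).isLt)

theorem sum_rockP_mul {n : ℕ} (lam : Nat.Partition n) (F : Multiset ℕ → ℚ) :
    ∑ mu, rockP n lam mu * F mu.parts =
      ((2 : ℚ) ^ n)⁻¹ * ∑ s : (j : Fin lam.parts.toList.length) →
          Fin (lam.parts.toList.get j + 1),
        (∏ j, ((lam.parts.toList.get j).choose (s j) : ℚ)) *
          F ((splitPieces s).filter (· ≠ 0)) := by
  simp_rw [rockP, mul_assoc, sum_mul, ← mul_sum]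
  rw [sum_comm]
  refine congrArg _ (sum_congr rfl fun s _ => ?_)
  simp_rw [ite_mul, zero_mul]
  refine Nat.Partition.sum_ite_parts_eq (fun i hi => ?_) ?_ (fun P => _ * F P)
  · exact Nat.pos_of_ne_zero (Multiset.mem_filter.mp hi).2
  · rw [← Multiset.map_id (Multiset.filter _ _), Multiset.sum_map_filter_ne_zero _ rfl,
      Multiset.map_id]
    exact (sum_splitPieces s).trans (by rw [Multiset.sum_toList, lam.parts_sum])

theorem rockBreaking_choose_eigenfunction_general (n r : ℕ) (hr : 1 ≤ r)
    (lam : Nat.Partition n) :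
    ∑ mu : Nat.Partition n,
        rockP n lam mu * (mu.parts.map fun p => (p.choose r : ℚ)).sum =
      (2 : ℚ) ^ ((1 : ℤ) - (r : ℤ)) * (lam.parts.map fun p => (p.choose r : ℚ)).sum := by
  rw [sum_rockP_mul lam fun P => (P.map fun p => (p.choose r : ℚ)).sum,
    Multiset.sum_map_eq_sum_toList_get]
  set L := lam.parts.toList
  have hpieces : ∀ s : (j : Fin L.length) → Fin (L.get j + 1),
      (((splitPieces s).filter (· ≠ 0)).map fun p => (p.choose r : ℚ)).sum =
        ∑ j, (((s j : ℕ).choose r : ℚ) + (L.get j - s j).choose r) := fun s => by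
    rw [Multiset.sum_map_filter_ne_zero _ (by simp [Nat.choose_eq_zero_of_lt hr]),
      sum_map_splitPieces]
  have hmass : ∀ m : ℕ, ∑ t : Fin (m + 1), (m.choose t : ℚ) = 2 ^ m := fun m => by
    rw [Fin.sum_univ_eq_sum_range (fun t => (m.choose t : ℚ))]
    exact_mod_cast Nat.sum_range_choose m
  have hparts : ∑ j, L.get j = n :=
    (Multiset.sum_map_eq_sum_toList_get lam.parts id).symm.trans (by
      rw [Multiset.map_id, lam.parts_sum])
  simp_rw [hpieces]
  rw [Fintype.sum_prod_mul_sum (fun j (t : Fin (L.get j + 1)) => ((L.get j).choose t : ℚ))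
      (fun j (t : Fin (L.get j + 1)) => ((t : ℕ).choose r : ℚ) + (L.get j - t).choose r)
      fun j => by rw [hmass]; positivity]
  simp_rw [hmass, sum_choose_mul_choose_add_choose_sub_div, prod_pow_eq_pow_sum, hparts]
  rw [inv_mul_cancel_left₀ (by positivity), mul_sum]

/-- The function `λ ↦ Σ_j C(λ_j, r)` is a right eigenfunction of the rock-breaking
chain with eigenvalue `2^{1-r}`. -/
theorem rockBreaking_choose_eigenfunction (n r : ℕ) (hn : 1 ≤ n) (hr : 1 ≤ r)
    (lam : Nat.Partition n) :
    ∑ mu : Nat.Partition n,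
        rockP n lam mu * (mu.parts.map fun p => (p.choose r : ℚ)).sum =
      (2 : ℚ) ^ ((1 : ℤ) - (r : ℤ)) * (lam.parts.map fun p => (p.choose r : ℚ)).sum :=
  rockBreaking_choose_eigenfunction_general n r hr lam
end

section
/- Fix n ≥ 1 and a partition λ of n. Define, for each partition μ of n, g_λ(μ) = (∏_{j=1}^{l(λ)} λ_j!) · ( (−1)^{l(μ)−l(λ)} / ∏_{s=1}^{l(μ)} μ_s! ) · Σ ∏_{j=1}^{l(λ)} ( (l(μ^j) − 1)! / ∏_{i≥1} a_i(μ^j)! ), the sum being over all tuples (μ^1, …, μ^{l(λ)}) of partitions such that μ^j is a partition of λ_j and the multiset union μ^1 ⊔ ⋯ ⊔ μ^{l(λ)} equals μ. Then g_λ is a left eigenfunction of the rock-breaking chain with eigenvalue 2^{l(λ)−n}: for every partition ρ of n, Σ_μ g_λ(μ) P_n(μ, ρ) = 2^{l(λ)−n} g_λ(ρ). Moreover g_λ(μ) = 0 unless μ is a refinement of λ. -/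
open scoped Classical

/-- `mu` refines `lam` if the parts of `mu` may be grouped into blocks whose sums are
the parts of `lam`. -/
def PartitionRefines (n : ℕ) (mu lam : Nat.Partition n) : Prop :=
  ∃ t : ((j : Fin lam.parts.toList.length) → Nat.Partition (lam.parts.toList.get j)),
    (∑ j, (t j).parts) = mu.parts

/-- The left eigenfunction `g_λ` of the rock-breaking chain:
`g_λ(μ) = (∏_j λ_j!) · ((−1)^{l(μ)−l(λ)}/∏_s μ_s!) · Σ ∏_j ((l(μ^j)−1)!/∏_i a_i(μ^j)!)`,
the sum being over all tuples `(μ^1, …, μ^{l(λ)})` of partitions with `μ^j ⊢ λ_j` and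
multiset union `μ`. -/
noncomputable def rockG (n : ℕ) (lam mu : Nat.Partition n) : ℚ :=
  (lam.parts.map fun j => (j.factorial : ℚ)).prod *
    ((-1 : ℚ) ^ (Multiset.card mu.parts - Multiset.card lam.parts) /
      (mu.parts.map fun s => (s.factorial : ℚ)).prod) *
    ∑ t : ((j : Fin lam.parts.toList.length) → Nat.Partition (lam.parts.toList.get j)),
      if (∑ j, (t j).parts) = mu.parts then
        ∏ j, (((Multiset.card (t j).parts - 1).factorial : ℚ) /
          ∏ i ∈ Finset.range (n + 1), (((t j).parts.count i).factorial : ℚ))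
      else 0

/-!
Encode a partition `μ` by the monomial `x_μ` in `ℚ[x₁, x₂, …]`. The algebra map `ψ` with
`ψ(x_k) = ∑_j C(k, j) x_j x_{k-j}` (and `x_0 = 1`) satisfies `ψ(x_μ) = 2^n ∑_ρ P_n(μ, ρ) x_ρ`, so
left eigenfunctions of `P_n` are eigenvectors of `ψ`.

Let `U = ∑_j x_j t^j / j!` and `V = log U`, whose coefficient of `t^k` is
`v_k = ∑_{ν ⊢ k} c(ν) x_ν` with `c(ν) = (-1)^{l(ν)-1} (l(ν)-1)! / (∏_s ν_s! ∏_i a_i(ν)!)`; then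
`∑_μ g_λ(μ) x_μ = ∏_j λ_j! v_{λ_j}`. The logarithm is never formed: `V` is characterised by
`U' = U V'`, which is a recursion for `c(ν)` over the removal of one part of `ν`. Applying `ψ`
coefficientwise gives `ψ(U) = U²`; differentiating and cancelling `U²` turns `U' = U V'` into
`ψ(V)' = 2 V'`. So `ψ` doubles every `v_k` with `k ≥ 1`, and multiplies the product over the
`l(λ)` parts of `λ` by `2^{l(λ)}`.
-/

theorem PowerSeries.derivative_map {R S : Type*} [CommSemiring R] [CommSemiring S] (f : R →+* S)
    (F : PowerSeries R) :
    PowerSeries.derivative S (PowerSeries.map f F) =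
      PowerSeries.map f (PowerSeries.derivative R F) := by
  ext n
  simp [PowerSeries.coeff_derivative]

namespace RockBreaking

section

open MvPolynomial

noncomputable def monomialOf (m : Multiset ℕ) : MvPolynomial ℕ ℚ := (m.map X).prod

theorem monomialOf_eq_monomial (m : Multiset ℕ) :
    monomialOf m = monomial (Multiset.toFinsupp m) 1 := by
  rw [monomialOf, Finset.prod_multiset_map_count, ← prod_X_pow_eq_monomial,
    Multiset.toFinsupp_support]
  rfl

theorem monomialOf_sum {ι : Type*} (s : Finset ι) (f : ι → Multiset ℕ) :
    monomialOf (∑ i ∈ s, f i) = ∏ i ∈ s, monomialOf (f i) := by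
  simp only [monomialOf_eq_monomial, map_sum, monomial_sum_one]

theorem coeff_sum_smul_monomialOf {n : ℕ} (a : Nat.Partition n → ℚ) (ρ : Nat.Partition n) :
    coeff (Multiset.toFinsupp ρ.parts) (∑ μ, a μ • monomialOf μ.parts) = a ρ := by
  simp only [coeff_sum, coeff_smul, monomialOf_eq_monomial, coeff_monomial,
    (Multiset.toFinsupp.injective.eq_iff), ← Nat.Partition.ext_iff, smul_eq_mul, mul_ite,
    mul_one, mul_zero, Finset.sum_ite_eq', Finset.mem_univ, if_true]

theorem eq_of_sum_smul_monomialOf_eq {n : ℕ} {a b : Nat.Partition n → ℚ}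
    (h : ∑ μ, a μ • monomialOf μ.parts = ∑ μ, b μ • monomialOf μ.parts) : a = b := by
  funext ρ
  rw [← coeff_sum_smul_monomialOf a ρ, h, coeff_sum_smul_monomialOf]

theorem sum_smul_monomialOf_eq_sum_fiber {ι : Type*} [Fintype ι] {n : ℕ}
    (φ : ι → Nat.Partition n) (c : ι → ℚ) :
    ∑ i, c i • monomialOf (φ i).parts =
      ∑ ρ : Nat.Partition n,
        (∑ i, if (φ i).parts = ρ.parts then c i else 0) • monomialOf ρ.parts := by
  rw [← Finset.sum_fiberwise Finset.univ φ]
  refine Finset.sum_congr rfl fun ρ _ => ?_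
  simp only [Finset.sum_smul, ← Nat.Partition.ext_iff, ← Finset.sum_filter]
  exact Finset.sum_congr rfl fun i hi => by rw [(Finset.mem_filter.1 hi).2]

/-- The empty rock is `1`, so that empty pieces disappear from products. -/
noncomputable def rock (j : ℕ) : MvPolynomial ℕ ℚ := if j = 0 then 1 else X j

theorem prod_map_rock (m : Multiset ℕ) :
    (m.map rock).prod = monomialOf (m.filter (· ≠ 0)) := by
  induction m using Multiset.induction_on with
  | empty => simp [monomialOf]
  | cons a m ih =>
    by_cases ha : a = 0 <;> simp [rock, ha, ih, monomialOf]

/-- Multiplication after comultiplication in the Hopf algebra of rock breaking. -/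
noncomputable def hopfSquare : MvPolynomial ℕ ℚ →ₐ[ℚ] MvPolynomial ℕ ℚ :=
  aeval fun k => ∑ j ∈ Finset.range (k + 1), (k.choose j : ℚ) • (rock j * rock (k - j))

theorem hopfSquare_rock (k : ℕ) :
    hopfSquare (rock k) =
      ∑ j ∈ Finset.range (k + 1), (k.choose j : ℚ) • (rock j * rock (k - j)) := by
  rcases eq_or_ne k 0 with rfl | hk
  · simp [rock]
  · simp [rock, hk, hopfSquare]

theorem get_toList_mem {α : Type*} (m : Multiset α) (j : Fin m.toList.length) :
    m.toList.get j ∈ m :=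
  Multiset.mem_toList.1 (List.get_mem _ j)

theorem prod_map_toList {α M : Type*} [CommMonoid M] (m : Multiset α) (f : α → M) :
    (m.map f).prod = ∏ j : Fin m.toList.length, f (m.toList.get j) := by
  simp

noncomputable def breakPartition {n : ℕ} (μ : Nat.Partition n)
    (s : (j : Fin μ.parts.toList.length) → Fin (μ.parts.toList.get j + 1)) : Nat.Partition n :=
  Nat.Partition.ofSums n (↑(List.ofFn fun j => (s j : ℕ)) +
      ↑(List.ofFn fun j => μ.parts.toList.get j - (s j : ℕ)))
    (by
      rw [Multiset.sum_add, Multiset.sum_coe, Multiset.sum_coe, List.sum_ofFn, List.sum_ofFn,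
        ← Finset.sum_add_distrib]
      simp only [fun j => Nat.add_sub_of_le (Nat.le_of_lt_succ (s j).is_lt)]
      simpa using μ.parts_sum)

theorem hopfSquare_monomialOf {n : ℕ} (μ : Nat.Partition n) :
    hopfSquare (monomialOf μ.parts) =
      ∑ ρ : Nat.Partition n, ((2 : ℚ) ^ n * rockP n μ ρ) • monomialOf ρ.parts := by
  have hpart : ∀ j, hopfSquare (X (μ.parts.toList.get j)) = ∑ i : Fin (μ.parts.toList.get j + 1),
      ((μ.parts.toList.get j).choose i : ℚ) • (rock i * rock (μ.parts.toList.get j - i)) := by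
    intro j
    rw [Fin.sum_univ_eq_sum_range (fun i => ((μ.parts.toList.get j).choose i : ℚ) •
      (rock i * rock (μ.parts.toList.get j - i))), ← hopfSquare_rock, rock,
      if_neg (Nat.pos_iff_ne_zero.1 (μ.parts_pos (get_toList_mem _ j)))]
  have hbreak : ∀ s, ∏ j, (rock (s j) * rock (μ.parts.toList.get j - s j)) =
      monomialOf (breakPartition μ s).parts := by
    intro s
    rw [breakPartition, Nat.Partition.ofSums_parts, ← prod_map_rock, Multiset.map_add,
      Multiset.prod_add, Multiset.map_coe, Multiset.map_coe, Multiset.prod_coe, Multiset.prod_coe,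
      List.map_ofFn, List.map_ofFn, List.prod_ofFn, List.prod_ofFn, ← Finset.prod_mul_distrib]
    rfl
  rw [monomialOf, prod_map_toList, map_prod, Finset.prod_congr rfl fun j _ => hpart j,
    Fintype.prod_sum]
  simp only [Finset.prod_smul, hbreak]
  rw [sum_smul_monomialOf_eq_sum_fiber]
  refine Finset.sum_congr rfl fun ρ _ => ?_
  rw [rockP, ← mul_assoc, mul_inv_cancel₀ (by positivity), one_mul]
  rfl

/-- The coefficient of `x_ν` in the logarithm of `∑_j x_j t^j / j!`. -/
noncomputable def logCoeff (m : Multiset ℕ) : ℚ :=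
  (-1) ^ (Multiset.card m - 1) * (Multiset.card m - 1).factorial /
    ((m.map fun s => (s.factorial : ℚ)).prod * ∏ i ∈ m.toFinset, ((m.count i).factorial : ℚ))

theorem prod_count_factorial_of_subset {m : Multiset ℕ} {s : Finset ℕ} (hs : m.toFinset ⊆ s) :
    ∏ i ∈ s, ((m.count i).factorial : ℚ) = ∏ i ∈ m.toFinset, ((m.count i).factorial : ℚ) :=
  (Finset.prod_subset hs fun i _ hi => by
    rw [Multiset.count_eq_zero.2 (by simpa using hi), Nat.factorial_zero, Nat.cast_one]).symm

theorem logCoeff_erase {m : Multiset ℕ} {j : ℕ} (hj : j ∈ m) (hm : 2 ≤ Multiset.card m) :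
    ((Multiset.card m : ℚ) - 1) * logCoeff (m.erase j) =
      -((j.factorial : ℚ) * m.count j) * logCoeff m := by
  obtain ⟨l, hl⟩ : ∃ l, Multiset.card m = l + 2 := ⟨_, (Nat.sub_add_cancel hm).symm⟩
  have hcount : 0 < m.count j := Multiset.count_pos.2 hj
  have hfact : ((m.erase j).map fun s => (s.factorial : ℚ)).prod * j.factorial =
      (m.map fun s => (s.factorial : ℚ)).prod := by
    rw [mul_comm]; exact Multiset.prod_map_erase (f := fun s => (s.factorial : ℚ)) hj
  have hmult : (∏ i ∈ (m.erase j).toFinset, (((m.erase j).count i).factorial : ℚ)) * m.count j =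
      ∏ i ∈ m.toFinset, ((m.count i).factorial : ℚ) := by
    have hjm : j ∈ m.toFinset := Multiset.mem_toFinset.2 hj
    rw [← prod_count_factorial_of_subset (Multiset.toFinset_subset.2 (Multiset.erase_subset j m)),
      ← Finset.mul_prod_erase _ _ hjm, ← Finset.mul_prod_erase _ _ hjm, Multiset.count_erase_self,
      Finset.prod_congr rfl fun i hi => by
        rw [Multiset.count_erase_of_ne (Finset.ne_of_mem_erase hi)],
      mul_right_comm, ← Nat.cast_mul, mul_comm _ (m.count j), Nat.mul_factorial_pred hcount.ne']
  have hF : ((m.erase j).map fun s => (s.factorial : ℚ)).prod ≠ 0 :=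
    Multiset.prod_ne_zero (by simp [Nat.factorial_ne_zero])
  have hA : ∏ i ∈ (m.erase j).toFinset, (((m.erase j).count i).factorial : ℚ) ≠ 0 := by
    positivity
  rw [logCoeff, logCoeff, Multiset.card_erase_of_mem hj, ← hfact, ← hmult, hl]
  simp only [Nat.add_sub_cancel, show l + 2 - 1 = l + 1 by omega, Nat.pred_eq_sub_one]
  field_simp
  push_cast [Nat.factorial_succ]
  ring

theorem logCoeff_recursion {m : Multiset ℕ} {k : ℕ} (hsum : m.sum = k) :
    k * logCoeff m +
        ∑ j ∈ m.toFinset, ((k : ℚ) - j) * ((j.factorial : ℚ)⁻¹ * logCoeff (m.erase j)) =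
      if m = {k} then k * (k.factorial : ℚ)⁻¹ else 0 := by
  rcases Nat.lt_or_ge (Multiset.card m) 2 with hm | hm
  · interval_cases hcard : Multiset.card m
    · obtain rfl := Multiset.card_eq_zero.1 hcard
      simp [← hsum]
    · obtain ⟨a, rfl⟩ := Multiset.card_eq_one.1 hcard
      obtain rfl : a = k := by simpa using hsum
      simp [logCoeff]
  have hne : m ≠ {k} := fun h => by simp [h] at hm
  have hl : (Multiset.card m : ℚ) - 1 ≠ 0 := by
    rw [sub_ne_zero]; exact_mod_cast (by omega : Multiset.card m ≠ 1)
  have hweights :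
      ∑ j ∈ m.toFinset, ((k : ℚ) - j) * m.count j = ((Multiset.card m : ℚ) - 1) * k := by
    have := Finset.sum_multiset_map_count m fun j => (k : ℚ) - j
    simp only [nsmul_eq_mul] at this
    rw [Finset.sum_congr rfl fun j _ => mul_comm _ _, ← this, Multiset.sum_map_sub,
      Multiset.map_const', Multiset.sum_replicate, ← Nat.cast_multiset_sum, hsum, nsmul_eq_mul]
    ring
  rw [if_neg hne, ← mul_right_inj' hl, mul_add, Finset.mul_sum, mul_zero]
  have hterm : ∀ j ∈ m.toFinset,
      ((Multiset.card m : ℚ) - 1) * (((k : ℚ) - j) * ((j.factorial : ℚ)⁻¹ * logCoeff (m.erase j))) =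
        -logCoeff m * (((k : ℚ) - j) * m.count j) := by
    intro j hj
    have hj! : (j.factorial : ℚ) ≠ 0 := by positivity
    calc _ = ((k : ℚ) - j) * (j.factorial : ℚ)⁻¹ *
          (((Multiset.card m : ℚ) - 1) * logCoeff (m.erase j)) := by ring
      _ = _ := by rw [logCoeff_erase (Multiset.mem_toFinset.1 hj) hm]; field_simp
  rw [Finset.sum_congr rfl hterm, ← Finset.mul_sum, hweights]
  ring

noncomputable def dividedRock (j : ℕ) : MvPolynomial ℕ ℚ := (j.factorial : ℚ)⁻¹ • rock j

noncomputable def logRock (k : ℕ) : MvPolynomial ℕ ℚ :=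
  ∑ ν : Nat.Partition k, logCoeff ν.parts • monomialOf ν.parts

theorem dividedRock_mul_logRock {j k : ℕ} (hj : 0 < j) (hjk : j ≤ k) :
    dividedRock j * logRock (k - j) = ∑ ρ : Nat.Partition k,
      (if j ∈ ρ.parts then (j.factorial : ℚ)⁻¹ * logCoeff (ρ.parts.erase j) else 0) •
        monomialOf ρ.parts := by
  let e := Nat.Partition.partitionWithPartEquiv hj hjk
  have hcons : ∀ ν : Nat.Partition (k - j), dividedRock j * (logCoeff ν.parts • monomialOf ν.parts)
      = ((j.factorial : ℚ)⁻¹ * logCoeff ((e.symm ν).1.parts.erase j)) •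
          monomialOf (e.symm ν).1.parts := by
    intro ν
    simp only [e, Nat.Partition.partitionWithPartEquiv_symm_apply_parts, Multiset.erase_cons_head,
      dividedRock, rock, if_neg hj.ne', smul_mul_smul_comm, monomialOf, Multiset.map_cons,
      Multiset.prod_cons]
  simp only [logRock, Finset.mul_sum, hcons, ite_smul, zero_smul]
  rw [← Finset.sum_filter, ← Finset.sum_subtype_eq_sum_filter, Finset.subtype_univ]
  exact e.symm.sum_comp fun ρ => ((j.factorial : ℚ)⁻¹ * logCoeff (ρ.1.parts.erase j)) •
    monomialOf ρ.1.parts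

theorem smul_dividedRock_eq_sum {k : ℕ} (hk : 0 < k) :
    (k : ℚ) • dividedRock k = ∑ ρ : Nat.Partition k,
      (if ρ.parts = {k} then (k : ℚ) * (k.factorial : ℚ)⁻¹ else 0) • monomialOf ρ.parts := by
  have hind : ∀ ρ : Nat.Partition k, ρ.parts = {k} ↔ ρ = Nat.Partition.indiscrete k := fun ρ => by
    rw [Nat.Partition.ext_iff, Nat.Partition.indiscrete_parts hk.ne']
  simp only [hind, ite_smul, zero_smul, Finset.sum_ite_eq', Finset.mem_univ, if_true,
    Nat.Partition.indiscrete_parts hk.ne', dividedRock, rock, if_neg hk.ne', smul_smul, monomialOf,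
    Multiset.map_singleton, Multiset.prod_singleton]

theorem sum_sub_smul_dividedRock_mul_logRock {k : ℕ} (hk : 0 < k) :
    ∑ j ∈ Finset.range (k + 1), ((k : ℚ) - j) • (dividedRock j * logRock (k - j)) =
      (k : ℚ) • dividedRock k := by
  have hparts : ∀ ρ : Nat.Partition k, ρ.parts.toFinset ⊆ Finset.Ico 1 (k + 1) := fun ρ j hj => by
    rw [Multiset.mem_toFinset] at hj
    exact Finset.mem_Ico.2 ⟨ρ.parts_pos hj, Nat.lt_succ_of_le (Nat.Partition.le_of_mem_parts hj)⟩
  rw [Finset.range_eq_Ico, Finset.sum_eq_sum_Ico_succ_bot (Nat.succ_pos k),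
    Finset.sum_congr rfl fun j hj => by
      rw [dividedRock_mul_logRock (Finset.mem_Ico.1 hj).1
        (Nat.le_of_lt_succ (Finset.mem_Ico.1 hj).2), Finset.smul_sum],
    Finset.sum_comm, smul_dividedRock_eq_sum hk]
  simp only [dividedRock, rock, Nat.factorial_zero, Nat.cast_one, inv_one, one_smul, if_pos,
    one_mul, Nat.cast_zero, sub_zero, Nat.sub_zero, logRock, Finset.smul_sum, smul_smul,
    ← Finset.sum_add_distrib, ← Finset.sum_smul, ← add_smul]
  refine Finset.sum_congr rfl fun ρ _ => congrArg (· • _) ?_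
  rw [← logCoeff_recursion ρ.parts_sum]
  simp only [mul_ite, mul_zero, ← Finset.sum_filter]
  congr 2
  ext j
  simp only [Finset.mem_filter, Multiset.mem_toFinset]
  exact ⟨And.right, fun h => ⟨hparts ρ (Multiset.mem_toFinset.2 h), h⟩⟩

end

open PowerSeries

noncomputable def rockSeries : PowerSeries (MvPolynomial ℕ ℚ) := mk dividedRock

noncomputable def logSeries : PowerSeries (MvPolynomial ℕ ℚ) := mk logRock

theorem constantCoeff_rockSeries : constantCoeff rockSeries = 1 := by
  simp [rockSeries, dividedRock, rock]

theorem mul_natCast_eq_smul {A : Type*} [Semiring A] [Module ℚ A] (x : A) (c : ℕ) :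
    x * (c : A) = (c : ℚ) • x := by
  rw [Nat.cast_smul_eq_nsmul, nsmul_eq_mul']

theorem derivative_rockSeries :
    d⁄dX _ rockSeries = rockSeries * d⁄dX _ logSeries := by
  refine PowerSeries.ext fun n => ?_
  have hrec := sum_sub_smul_dividedRock_mul_logRock (k := n + 1) n.succ_pos
  rw [Finset.sum_range_succ, sub_self, zero_smul, add_zero] at hrec
  rw [coeff_derivative, coeff_mul, Finset.Nat.sum_antidiagonal_eq_sum_range_succ
    (fun i j => coeff i rockSeries * coeff j (d⁄dX _ logSeries))]
  simp only [coeff_derivative, rockSeries, logSeries, coeff_mk, ← Nat.cast_add_one,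
    mul_natCast_eq_smul, mul_smul_comm]
  rw [← hrec]
  refine Finset.sum_congr rfl fun j hj => ?_
  have hjn : j ≤ n := Nat.le_of_lt_succ (Finset.mem_range.1 hj)
  rw [show n - j + 1 = n + 1 - j by omega, Nat.cast_sub (by omega)]

theorem hopfSquare_dividedRock (k : ℕ) :
    hopfSquare (dividedRock k) =
      ∑ j ∈ Finset.range (k + 1), dividedRock j * dividedRock (k - j) := by
  rw [dividedRock, map_smul, hopfSquare_rock, Finset.smul_sum]
  refine Finset.sum_congr rfl fun j hj => ?_
  have hjk : j ≤ k := Nat.le_of_lt_succ (Finset.mem_range.1 hj)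
  rw [dividedRock, dividedRock, smul_mul_smul_comm, smul_smul, Nat.cast_choose ℚ hjk]
  congr 1
  field_simp

theorem map_hopfSquare_rockSeries :
    map hopfSquare.toRingHom rockSeries = rockSeries ^ 2 := by
  refine PowerSeries.ext fun n => ?_
  rw [coeff_map, pow_two, coeff_mul, Finset.Nat.sum_antidiagonal_eq_sum_range_succ
    (fun i j => coeff i rockSeries * coeff j rockSeries)]
  simp only [rockSeries, coeff_mk]
  exact hopfSquare_dividedRock n

theorem hopfSquare_logRock {k : ℕ} (hk : 0 < k) : hopfSquare (logRock k) = (2 : ℚ) • logRock k := by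
  obtain ⟨m, rfl⟩ : ∃ m, k = m + 1 := ⟨k - 1, (Nat.sub_add_cancel hk).symm⟩
  set ψ := hopfSquare.toRingHom
  have hmapped : rockSeries ^ 2 * d⁄dX _ (map ψ logSeries) = d⁄dX _ (rockSeries ^ 2) := by
    rw [← map_hopfSquare_rockSeries, derivative_map, derivative_map, derivative_rockSeries, map_mul]
  have hsquare : d⁄dX _ (rockSeries ^ 2) = rockSeries ^ 2 * ((2 : ℚ) • d⁄dX _ logSeries) := by
    rw [derivative_pow, derivative_rockSeries, two_smul]
    ring
  have hU : rockSeries ^ 2 ≠ 0 := pow_ne_zero _ fun h => by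
    simpa [constantCoeff_rockSeries] using congrArg constantCoeff h
  have hderiv := congrArg (coeff m) (mul_left_cancel₀ hU (hmapped.trans hsquare))
  rw [coeff_derivative, coeff_smul, coeff_derivative, coeff_map, ← smul_mul_assoc, logSeries,
    coeff_mk] at hderiv
  exact mul_right_cancel₀ (Nat.cast_add_one_ne_zero m) hderiv

noncomputable def joinPartition {n : ℕ} {lam : Nat.Partition n}
    (t : (j : Fin lam.parts.toList.length) → Nat.Partition (lam.parts.toList.get j)) :
    Nat.Partition n where
  parts := ∑ j, (t j).parts
  parts_pos hi := by
    obtain ⟨j, -, hj⟩ := Multiset.mem_sum.1 hi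
    exact (t j).parts_pos hj
  parts_sum := by
    rw [Multiset.sum_sum, Finset.sum_congr rfl fun j _ => (t j).parts_sum]
    simpa using lam.parts_sum

theorem joinPartition_parts {n : ℕ} {lam : Nat.Partition n}
    (t : (j : Fin lam.parts.toList.length) → Nat.Partition (lam.parts.toList.get j)) :
    (joinPartition t).parts = ∑ j, (t j).parts :=
  rfl

theorem one_le_card_parts {k : ℕ} (hk : 0 < k) (ν : Nat.Partition k) : 1 ≤ Multiset.card ν.parts :=
  Multiset.card_pos.2 fun h => by
    have := ν.parts_sum
    simp only [h, Multiset.sum_zero] at this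
    omega

theorem prod_factorial_mul_logCoeff {n : ℕ} {lam μ : Nat.Partition n}
    (t : (j : Fin lam.parts.toList.length) → Nat.Partition (lam.parts.toList.get j))
    (ht : ∑ j, (t j).parts = μ.parts) :
    ∏ j, ((lam.parts.toList.get j).factorial * logCoeff (t j).parts) =
      (lam.parts.map fun j => (j.factorial : ℚ)).prod *
        ((-1 : ℚ) ^ (Multiset.card μ.parts - Multiset.card lam.parts) /
          (μ.parts.map fun s => (s.factorial : ℚ)).prod) *
        ∏ j, (((Multiset.card (t j).parts - 1).factorial : ℚ) /
          ∏ i ∈ Finset.range (n + 1), (((t j).parts.count i).factorial : ℚ)) := by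
  have hlog : ∀ j, logCoeff (t j).parts = (-1) ^ (Multiset.card (t j).parts - 1) *
      (((t j).parts.map fun s => (s.factorial : ℚ)).prod)⁻¹ *
        (((Multiset.card (t j).parts - 1).factorial : ℚ) /
          ∏ i ∈ Finset.range (n + 1), (((t j).parts.count i).factorial : ℚ)) := by
    intro j
    rw [logCoeff, ← prod_count_factorial_of_subset (s := Finset.range (n + 1)) fun i hi => ?_]
    · ring
    have hi := Nat.Partition.le_of_mem_parts (Multiset.mem_toFinset.1 hi)
    have hj := Nat.Partition.le_of_mem_parts (get_toList_mem lam.parts j)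
    exact Finset.mem_range.2 (by omega)
  have hcard : ∑ j, (Multiset.card (t j).parts - 1) =
      Multiset.card μ.parts - Multiset.card lam.parts := by
    rw [Finset.sum_tsub_distrib _ fun j _ =>
        one_le_card_parts (lam.parts_pos (get_toList_mem lam.parts j)) (t j),
      ← Multiset.card_sum, ht]
    simp
  have hfact : ∏ j, ((t j).parts.map fun s => (s.factorial : ℚ)).prod =
      (μ.parts.map fun s => (s.factorial : ℚ)).prod := by
    rw [← ht, ← Multiset.coe_mapAddMonoidHom, map_sum, Multiset.prod_sum]
  simp only [hlog, Finset.prod_mul_distrib, Finset.prod_pow_eq_pow_sum, hcard,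
    Finset.prod_inv_distrib, hfact, prod_map_toList lam.parts]
  ring

theorem prod_smul_logRock {n : ℕ} (lam : Nat.Partition n) :
    ∏ j, ((lam.parts.toList.get j).factorial : ℚ) • logRock (lam.parts.toList.get j) =
      ∑ μ : Nat.Partition n, rockG n lam μ • monomialOf μ.parts := by
  simp only [logRock, Finset.smul_sum, smul_smul]
  rw [Fintype.prod_sum]
  simp only [Finset.prod_smul, ← monomialOf_sum]
  refine (sum_smul_monomialOf_eq_sum_fiber joinPartition _).trans
    (Finset.sum_congr rfl fun μ _ => congrArg (· • _) ?_)
  rw [rockG, Finset.mul_sum]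
  refine Finset.sum_congr rfl fun t _ => ?_
  rw [joinPartition_parts]
  by_cases ht : ∑ j, (t j).parts = μ.parts
  · rw [if_pos ht, if_pos ht]
    exact prod_factorial_mul_logCoeff t ht
  · rw [if_neg ht, if_neg ht, mul_zero]

theorem hopfSquare_prod_smul_logRock {n : ℕ} (lam : Nat.Partition n) :
    hopfSquare (∏ j, ((lam.parts.toList.get j).factorial : ℚ) • logRock (lam.parts.toList.get j)) =
      (2 : ℚ) ^ Multiset.card lam.parts •
        ∏ j, ((lam.parts.toList.get j).factorial : ℚ) • logRock (lam.parts.toList.get j) := by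
  simp only [map_prod, map_smul, hopfSquare_logRock (lam.parts_pos (get_toList_mem _ _)),
    smul_smul, Finset.prod_smul, Finset.prod_const, Finset.card_univ,
    Fintype.card_fin, Multiset.length_toList]
  ring_nf

theorem sum_mul_rockP_of_hopfSquare_eq_smul {n : ℕ} {g : Nat.Partition n → ℚ} {c : ℚ}
    (h : hopfSquare (∑ μ, g μ • monomialOf μ.parts) = c • ∑ μ, g μ • monomialOf μ.parts)
    (ρ : Nat.Partition n) :
    (2 : ℚ) ^ n * ∑ μ, g μ * rockP n μ ρ = c * g ρ := by
  have hleft : hopfSquare (∑ μ, g μ • monomialOf μ.parts) =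
      ∑ ρ, ((2 : ℚ) ^ n * ∑ μ, g μ * rockP n μ ρ) • monomialOf ρ.parts := by
    simp only [map_sum, map_smul, hopfSquare_monomialOf, Finset.smul_sum, smul_smul,
      Finset.mul_sum, Finset.sum_smul]
    rw [Finset.sum_comm]
    simp only [mul_left_comm]
  have hright : c • ∑ μ, g μ • monomialOf μ.parts = ∑ μ, (c * g μ) • monomialOf μ.parts := by
    simp only [Finset.smul_sum, smul_smul]
  exact congrFun (eq_of_sum_smul_monomialOf_eq (hleft.symm.trans (h.trans hright))) ρ

end RockBreaking

theorem rockBreaking_left_eigenfunction_general (n : ℕ) (lam : Nat.Partition n) :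
    (∀ rho : Nat.Partition n,
      ∑ mu : Nat.Partition n, rockG n lam mu * rockP n mu rho =
        (2 : ℚ) ^ ((Multiset.card lam.parts : ℤ) - (n : ℤ)) * rockG n lam rho) ∧
    (∀ mu : Nat.Partition n, ¬ PartitionRefines n mu lam → rockG n lam mu = 0) := by
  refine ⟨fun ρ => ?_, fun μ hμ => ?_⟩
  · have heigen := RockBreaking.hopfSquare_prod_smul_logRock lam
    rw [RockBreaking.prod_smul_logRock] at heigen
    have h := RockBreaking.sum_mul_rockP_of_hopfSquare_eq_smul heigen ρ
    rw [zpow_sub₀ two_ne_zero, zpow_natCast, zpow_natCast, div_mul_eq_mul_div, ← h]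
    field_simp
  · rw [rockG, Finset.sum_eq_zero fun t _ => if_neg fun ht => hμ ⟨t, ht⟩, mul_zero]

/-- `g_λ` is a left eigenfunction of the rock-breaking chain with eigenvalue
`2^{l(λ)-n}`, and `g_λ(μ) = 0` unless `μ` refines `λ`. -/
theorem rockBreaking_left_eigenfunction (n : ℕ) (hn : 1 ≤ n) (lam : Nat.Partition n) :
    (∀ rho : Nat.Partition n,
      ∑ mu : Nat.Partition n, rockG n lam mu * rockP n mu rho =
        (2 : ℚ) ^ ((Multiset.card lam.parts : ℤ) - (n : ℤ)) * rockG n lam rho) ∧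
    (∀ mu : Nat.Partition n, ¬ PartitionRefines n mu lam → rockG n lam mu = 0) :=
  rockBreaking_left_eigenfunction_general n lam
end

section
/- Fix n ≥ 1, an integer a ≥ 1, and a word w : {1,…,n} → ℕ (a deck of cards whose values may repeat). For a word u of length n, let asc(u) = #{1 ≤ i ≤ n−1 : u(i) < u(i+1)} and des(u) = #{1 ≤ i ≤ n−1 : u(i) > u(i+1)}. For each function f : {1,…,n} → {1,…,a}, let ρ_f ∈ S_n be the permutation such that ρ_f(1), ρ_f(2), …, ρ_f(n) lists the positions {1,…,n} in increasing lexicographic order of the pairs (f(i), i); the GSR a-shuffle applied to w with cut-labels f produces the word w ∘ ρ_f^{−1}. Then Σ_{f : {1,…,n} → {1,…,a}} [ asc(w ∘ ρ_f^{−1}) − des(w ∘ ρ_f^{−1}) ] = a^{n−1} · [ asc(w) − des(w) ]; that is, asc − des is a right eigenfunction of the a-shuffle chain on decks of any composition, with eigenvalue 1/a. -/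
open scoped Classical

/-- The number of strict ascents of a word `u` of length `n`:
positions `i` with `u(i) < u(i+1)`. -/
noncomputable def wordAscents {n : ℕ} (u : Fin n → ℕ) : ℕ :=
  ((Finset.range n).filter fun i =>
    ∃ h : i + 1 < n, u ⟨i, Nat.lt_of_succ_lt h⟩ < u ⟨i + 1, h⟩).card

/-- The number of strict descents of a word `u` of length `n`:
positions `i` with `u(i) > u(i+1)`. -/
noncomputable def wordDescents {n : ℕ} (u : Fin n → ℕ) : ℕ :=
  ((Finset.range n).filter fun i =>
    ∃ h : i + 1 < n, u ⟨i + 1, h⟩ < u ⟨i, Nat.lt_of_succ_lt h⟩).card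

/-! The shuffled word has `u j = w (ρ_f⁻¹ j)`, so `asc − des` of it is a sum over adjacent
pairs `(j, j+1)` of an antisymmetric comparison of `w` at the ranks `ρ_f⁻¹ j` and `ρ_f⁻¹ (j+1)`,
where `ρ_f⁻¹ p` counts the positions `q` with `(f q, q) < (f p, p)` lexicographically.
Fix a pair. Labellings with `f j ≠ f (j+1)` cancel against their images under swapping the two
labels, which swaps the two ranks. A labelling with `f j = f (j+1)` gives consecutive ranks, and
merging the two positions is a bijection onto labellings of length `n − 1` that preserves the
rank of `j`. So each pair contributes the sum over `g : [n−1] → [a]` of the comparison of `w` at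
`ρ_g⁻¹ j` and `ρ_g⁻¹ j + 1`. Summing over `j` first, `ρ_g⁻¹` is a permutation, so each `g`
contributes `asc(w) − des(w)`. -/

open Finset

theorem Fin.swap_castSucc_succ_lt_swap {m : ℕ} {i : Fin m} {p q : Fin (m + 1)} (hpq : p < q)
    (h : (p, q) ≠ (i.castSucc, i.succ)) :
    Equiv.swap i.castSucc i.succ p < Equiv.swap i.castSucc i.succ q := by
  rw [Equiv.swap_apply_def, Equiv.swap_apply_def]
  simp only [ne_eq, Prod.mk.injEq] at h
  split_ifs <;> grind

theorem Fin.comp_succAbove_castSucc_eq_comp_succAbove_succ {α : Type*} {m : ℕ}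
    (f : Fin (m + 1) → α) (i : Fin m) (hf : f i.castSucc = f i.succ) :
    f ∘ i.castSucc.succAbove = f ∘ i.succ.succAbove := by
  funext j
  rcases lt_trichotomy j i with hj | rfl | hj
  · simp [Fin.succAbove_castSucc_of_lt _ _ hj, Fin.succAbove_succ_of_le _ _ hj.le]
  · simp [hf]
  · simp [Fin.succAbove_castSucc_of_le _ _ hj.le, Fin.succAbove_succ_of_lt _ _ hj]

namespace Tuple

variable {α : Type*} [LinearOrder α]

theorem sort_inv_lt_sort_inv_iff {n : ℕ} (f : Fin n → α) (p q : Fin n) :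
    (sort f)⁻¹ p < (sort f)⁻¹ q ↔ toLex (f p, p) < toLex (f q, q) := by
  rw [← (eq_sort_iff'.1 (rfl : sort f = sort f)).lt_iff_lt]
  simp only [graphEquiv₁, Equiv.Perm.coe_inv, Equiv.trans_apply, Equiv.apply_symm_apply,
    Equiv.coe_fn_mk]
  exact Iff.rfl

theorem val_sort_inv {n : ℕ} (f : Fin n → α) (p : Fin n) :
    ((sort f)⁻¹ p : ℕ) = #{q | toLex (f q, q) < toLex (f p, p)} := by
  simp_rw [← sort_inv_lt_sort_inv_iff]
  rw [← Fin.card_Iio, ← card_map (sort f).toEmbedding]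
  congr 1
  ext j
  simp

theorem val_sort_inv_succAbove {m : ℕ} (f : Fin (m + 1) → α) (p : Fin (m + 1)) (j : Fin m) :
    ((sort f)⁻¹ (p.succAbove j) : ℕ) = (sort (f ∘ p.succAbove))⁻¹ j +
      if toLex (f p, p) < toLex (f (p.succAbove j), p.succAbove j) then 1 else 0 := by
  simp only [val_sort_inv, card_filter, Fin.sum_univ_succAbove _ p, Function.comp_apply,
    Prod.Lex.toLex_lt_toLex, (Fin.strictMono_succAbove p).lt_iff_lt]
  rw [add_comm]

theorem sort_comp_perm_inv {n : ℕ} (f : Fin n → α) (s : Equiv.Perm (Fin n))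
    (hs : ∀ p q, p < q → f p = f q → s p < s q) : sort (f ∘ ⇑s⁻¹) = s * sort f := by
  obtain ⟨hmono, hties⟩ := eq_sort_iff.1 (rfl : sort f = sort f)
  refine (eq_sort_iff.2
    ⟨?_, fun i j hij hf => hs (sort f i) (sort f j) (hties i j hij ?_) ?_⟩).symm
  · simpa [Function.comp_def] using hmono
  · simpa using hf
  · simpa using hf

variable {m : ℕ} (f : Fin (m + 1) → α) (i : Fin m)

theorem sort_inv_castSucc_of_eq (hf : f i.castSucc = f i.succ) :
    (sort f)⁻¹ i.castSucc = ((sort (f ∘ i.succ.succAbove))⁻¹ i).castSucc := by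
  ext
  rw [← Fin.succAbove_succ_self i, val_sort_inv_succAbove]
  simp [hf, Prod.Lex.toLex_lt_toLex, Fin.castSucc_lt_succ.le]

theorem sort_inv_succ_of_eq (hf : f i.castSucc = f i.succ) :
    (sort f)⁻¹ i.succ = ((sort (f ∘ i.succ.succAbove))⁻¹ i).succ := by
  ext
  conv_lhs => rw [← Fin.succAbove_castSucc_self i]
  rw [val_sort_inv_succAbove, Fin.comp_succAbove_castSucc_eq_comp_succAbove_succ f i hf]
  simp [hf, Prod.Lex.toLex_lt_toLex]

theorem sort_comp_swap_inv_apply (hf : f i.castSucc ≠ f i.succ) (p : Fin (m + 1)) :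
    (sort (f ∘ Equiv.swap i.castSucc i.succ))⁻¹ p =
      (sort f)⁻¹ (Equiv.swap i.castSucc i.succ p) := by
  have hsort := sort_comp_perm_inv f (Equiv.swap i.castSucc i.succ) fun p q hpq hfpq =>
    Fin.swap_castSucc_succ_lt_swap hpq fun h => by
      simp only [Prod.mk.injEq] at h
      exact hf (h.1 ▸ h.2 ▸ hfpq)
  rw [Equiv.swap_inv] at hsort
  simp [hsort]

end Tuple

open Tuple

section AdjacentSum

variable {β M : Type*} [Fintype β] [LinearOrder β] [AddCommGroup M] {m : ℕ}
  (φ : Fin (m + 1) → Fin (m + 1) → M)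

theorem sum_sort_inv_adjacent_of_ne (hφ : ∀ x y, φ y x = -φ x y) (i : Fin m) :
    ∑ f : Fin (m + 1) → β with f i.castSucc ≠ f i.succ,
      φ ((sort f)⁻¹ i.castSucc) ((sort f)⁻¹ i.succ) = 0 := by
  refine sum_involution (fun f _ => f ∘ Equiv.swap i.castSucc i.succ) ?_ ?_ ?_ ?_
  · intro f hf
    rw [mem_filter] at hf
    rw [sort_comp_swap_inv_apply f i hf.2, sort_comp_swap_inv_apply f i hf.2,
      Equiv.swap_apply_left, Equiv.swap_apply_right, hφ, neg_add_cancel]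
  · intro f hf _ hfix
    rw [mem_filter] at hf
    exact hf.2 (by simpa using (congrFun hfix i.castSucc).symm)
  · intro f hf
    simp only [mem_filter, mem_univ, true_and] at hf ⊢
    simpa using Ne.symm hf
  · intro f _
    ext
    simp

theorem sum_sort_inv_adjacent_of_eq (i : Fin m) :
    ∑ f : Fin (m + 1) → β with f i.castSucc = f i.succ,
      φ ((sort f)⁻¹ i.castSucc) ((sort f)⁻¹ i.succ) =
    ∑ g : Fin m → β, φ ((sort g)⁻¹ i).castSucc ((sort g)⁻¹ i).succ := by
  refine sum_nbij' (· ∘ i.succ.succAbove) (fun g => i.succ.insertNth (g i) g) ?_ ?_ ?_ ?_ ?_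
  · simp
  · intro g _
    simp only [mem_filter, mem_univ, true_and]
    rw [← Fin.succAbove_succ_self i, Fin.insertNth_apply_succAbove, Fin.insertNth_apply_same]
  · intro f hf
    simp only [mem_filter, mem_univ, true_and] at hf
    simp only [Function.comp_apply, Fin.succAbove_succ_self, hf]
    exact Fin.insertNth_self_removeNth _ _
  · intro g _
    simp
  · intro f hf
    rw [mem_filter] at hf
    rw [sort_inv_castSucc_of_eq f i hf.2, sort_inv_succ_of_eq f i hf.2]

theorem sum_sort_inv_adjacent (hφ : ∀ x y, φ y x = -φ x y) (i : Fin m) :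
    ∑ f : Fin (m + 1) → β, φ ((sort f)⁻¹ i.castSucc) ((sort f)⁻¹ i.succ) =
    ∑ g : Fin m → β, φ ((sort g)⁻¹ i).castSucc ((sort g)⁻¹ i).succ := by
  rw [← sum_filter_add_sum_filter_not _ fun f => f i.castSucc = f i.succ,
    sum_sort_inv_adjacent_of_eq, sum_sort_inv_adjacent_of_ne φ hφ, add_zero]

theorem sum_sum_sort_inv_adjacent (hφ : ∀ x y, φ y x = -φ x y) :
    ∑ f : Fin (m + 1) → β, ∑ i : Fin m,
        φ ((sort f)⁻¹ i.castSucc) ((sort f)⁻¹ i.succ) =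
    Fintype.card β ^ m • ∑ i : Fin m, φ i.castSucc i.succ := by
  rw [sum_comm]
  simp_rw [sum_sort_inv_adjacent φ hφ]
  rw [sum_comm]
  simp_rw [Equiv.sum_comp (sort _)⁻¹ fun j => φ j.castSucc j.succ]
  simp

end AdjacentSum

theorem card_filter_range_exists_adjacent {m : ℕ} (R : Fin (m + 1) → Fin (m + 1) → Prop)
    [DecidableRel R] :
    #{i ∈ range (m + 1) | ∃ h : i + 1 < m + 1, R ⟨i, Nat.lt_of_succ_lt h⟩ ⟨i + 1, h⟩} =
      #{i : Fin m | R i.castSucc i.succ} := by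
  rw [card_filter, card_filter, sum_range, Fin.sum_univ_castSucc]
  simp [Fin.castSucc, Fin.castAdd, Fin.castLE, Fin.succ]

theorem wordAscents_eq_card {m : ℕ} (u : Fin (m + 1) → ℕ) :
    wordAscents u = #{i : Fin m | u i.castSucc < u i.succ} :=
  card_filter_range_exists_adjacent fun p q => u p < u q

theorem wordDescents_eq_card {m : ℕ} (u : Fin (m + 1) → ℕ) :
    wordDescents u = #{i : Fin m | u i.succ < u i.castSucc} :=
  card_filter_range_exists_adjacent fun p q => u q < u p

theorem wordAscents_sub_wordDescents {m : ℕ} (u : Fin (m + 1) → ℕ) :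
    (wordAscents u : ℤ) - wordDescents u =
      ∑ i : Fin m, ((if u i.castSucc < u i.succ then 1 else 0) -
        if u i.succ < u i.castSucc then 1 else 0) := by
  rw [wordAscents_eq_card, wordDescents_eq_card, card_filter, card_filter]
  push_cast
  rw [← sum_sub_distrib]

theorem gsr_word_ascents_minus_descents_eigenfunction_general (n a : ℕ) (hn : 1 ≤ n)
    (w : Fin n → ℕ) :
    ∑ f : Fin n → Fin a,
        ((wordAscents (w ∘ ⇑(Tuple.sort f)⁻¹) : ℤ) -
          (wordDescents (w ∘ ⇑(Tuple.sort f)⁻¹) : ℤ)) =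
      (a : ℤ) ^ (n - 1) * ((wordAscents w : ℤ) - (wordDescents w : ℤ)) := by
  obtain ⟨m, rfl⟩ := Nat.exists_eq_add_of_le' hn
  simp only [wordAscents_sub_wordDescents, Function.comp_apply]
  simpa using sum_sum_sort_inv_adjacent (β := Fin a)
    (fun x y => (if w x < w y then 1 else 0 : ℤ) - if w y < w x then 1 else 0)
    fun x y => (neg_sub _ _).symm

/-- `asc − des` is a right eigenfunction, with eigenvalue `1/a`, of the GSR `a`-shuffle
on decks of any composition: summing over all cut-label functions `f : [n] → [a]`
(where `Tuple.sort f` lists the positions in increasing lexicographic order of the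
pairs `(f i, i)`, so the shuffle produces the word `w ∘ (Tuple.sort f)⁻¹`),
`Σ_f [asc(w ∘ ρ_f⁻¹) − des(w ∘ ρ_f⁻¹)] = a^{n−1} · [asc(w) − des(w)]`. -/
theorem gsr_word_ascents_minus_descents_eigenfunction (n a : ℕ) (hn : 1 ≤ n)
    (ha : 1 ≤ a) (w : Fin n → ℕ) :
    ∑ f : Fin n → Fin a,
        ((wordAscents (w ∘ ⇑(Tuple.sort f)⁻¹) : ℤ) -
          (wordDescents (w ∘ ⇑(Tuple.sort f)⁻¹) : ℤ)) =
      (a : ℤ) ^ (n - 1) * ((wordAscents w : ℤ) - (wordDescents w : ℤ)) :=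
  gsr_word_ascents_minus_descents_eigenfunction_general n a hn w
end

section
/- Fix n ≥ 1 and let C⁰ be a simplicial complex on vertex set {1,…,n}, i.e., a family of nonempty subsets of {1,…,n} closed under taking nonempty subsets and containing all singletons. Consider the Markov chain on such complexes with transition probabilities P(C, C') = 2^{−n} · #{S ⊆ {1,…,n} : C' = {A ∈ C : A ⊆ S or A ⊆ Sᶜ}} (color the vertices red/blue independently with probability 1/2 and erase all faces containing vertices of both colors). Let C_• be the absorbing complex consisting of the n singletons. Then for every k ≥ 0, the k-step probability of absorption equals the number of proper 2^k-colorings of the 1-skeleton divided by 2^{nk}: P^k(C⁰, C_•) = 2^{−nk} · #{c : {1,…,n} → {1,…,2^k} : for every 2-element face {x,y} ∈ C⁰, c(x) ≠ c(y)}. In particular, P^k(C⁰, C_•) = p₀(2^k)/2^{nk}, where p₀ is the chromatic polynomial of the graph whose edges are the 2-element faces of C⁰. -/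
open scoped Classical

/-- A simplicial complex on the vertex set `{1, …, n}`: a family of nonempty subsets
closed under taking nonempty subsets and containing all singletons. -/
def SimpComplex (n : ℕ) : Type :=
  {C : Finset (Finset (Fin n)) //
    (∀ A ∈ C, A.Nonempty) ∧
    (∀ A ∈ C, ∀ B ⊆ A, B.Nonempty → B ∈ C) ∧
    (∀ v : Fin n, {v} ∈ C)}

noncomputable instance (n : ℕ) : Fintype (SimpComplex n) := Subtype.fintype _

instance (n : ℕ) : DecidableEq (SimpComplex n) := Subtype.instDecidableEq

/-- The vertex-coloring Markov chain on simplicial complexes: color the vertices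
red/blue uniformly and independently, and keep only the faces that are monochromatic
(contained in the red set `S` or in the blue set `Sᶜ`). -/
noncomputable def simpComplexMatrix (n : ℕ) :
    Matrix (SimpComplex n) (SimpComplex n) ℚ :=
  Matrix.of fun C C' =>
    ((Finset.univ.filter fun S : Finset (Fin n) =>
        C'.1 = C.1.filter fun A => A ⊆ S ∨ A ⊆ Sᶜ).card : ℚ) / 2 ^ n

/-- The absorbing complex consisting of the `n` singletons. -/
def pointsComplex (n : ℕ) : SimpComplex n :=
  ⟨Finset.univ.image fun v => ({v} : Finset (Fin n)),
    by
      intro A hA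
      rcases Finset.mem_image.mp hA with ⟨v, -, rfl⟩
      exact Finset.singleton_nonempty v,
    by
      intro A hA B hB hBne
      rcases Finset.mem_image.mp hA with ⟨v, -, rfl⟩
      rcases (Finset.subset_singleton_iff.mp hB) with rfl | rfl
      · exact absurd hBne (by simp)
      · exact hA,
    fun v => Finset.mem_image.mpr ⟨v, Finset.mem_univ v, rfl⟩⟩

/-!
Coloring with `2^k` colors is coloring with `k` red/blue colorings at once. A face survives
`k` steps of the chain iff it is monochromatic for each of the `k` independent uniform
red/blue colorings, i.e. for the combined coloring by `{0,1}^k`; so the chain is absorbed iff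
this uniformly random combined coloring is proper on the `1`-skeleton. Inductively: splitting
off the last bit of the color turns the number of proper colorings into a sum over one step
of the chain, exactly as the first-step decomposition does for the absorption probability.
-/

namespace SimpComplex

variable {n : ℕ}

def monochromatic (C : SimpComplex n) (S : Finset (Fin n)) : SimpComplex n :=
  ⟨C.1.filter fun A => A ⊆ S ∨ A ⊆ Sᶜ, by
    obtain ⟨hne, hdown, hsingle⟩ := C.2
    refine ⟨fun A hA => hne A (Finset.mem_filter.mp hA).1, ?_, fun v => ?_⟩
    · intro A hA B hBA hB
      obtain ⟨hAC, hAS⟩ := Finset.mem_filter.mp hA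
      exact Finset.mem_filter.mpr ⟨hdown A hAC B hBA hB, hAS.imp hBA.trans hBA.trans⟩
    · refine Finset.mem_filter.mpr ⟨hsingle v, ?_⟩
      by_cases hv : v ∈ S <;> simp [hv]⟩

lemma pair_mem_monochromatic_iff (C : SimpComplex n) (S : Finset (Fin n)) (x y : Fin n) :
    ({x, y} : Finset (Fin n)) ∈ (C.monochromatic S).1 ↔
      {x, y} ∈ C.1 ∧ (x ∈ S ↔ y ∈ S) := by
  simp only [monochromatic, Finset.mem_filter, Finset.insert_subset_iff,
    Finset.singleton_subset_iff, Finset.mem_compl]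
  tauto

def IsProperColoring {α : Type*} (C : SimpComplex n) (c : Fin n → α) : Prop :=
  ∀ x y : Fin n, x ≠ y → ({x, y} : Finset (Fin n)) ∈ C.1 → c x ≠ c y

lemma eq_pointsComplex_iff (C : SimpComplex n) :
    C = pointsComplex n ↔ ∀ x y : Fin n, x ≠ y → ({x, y} : Finset (Fin n)) ∉ C.1 := by
  obtain ⟨hne, hdown, hsingle⟩ := C.2
  constructor
  · rintro rfl x y hxy hpair
    obtain ⟨v, -, hv⟩ := Finset.mem_image.mp hpair
    have := congrArg Finset.card hv
    rw [Finset.card_singleton, Finset.card_pair hxy] at this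
    omega
  · intro hnoedge
    apply Subtype.ext
    ext A
    refine ⟨fun hA => ?_, fun hA => ?_⟩
    · have hcard : A.card = 1 := by
        refine le_antisymm (not_lt.mp fun hlt => ?_) (Finset.card_pos.mpr (hne A hA))
        obtain ⟨x, hx, y, hy, hxy⟩ := Finset.one_lt_card.mp hlt
        exact hnoedge x y hxy (hdown A hA {x, y}
          (Finset.insert_subset_iff.mpr ⟨hx, Finset.singleton_subset_iff.mpr hy⟩)
          (Finset.insert_nonempty x {y}))
      obtain ⟨v, rfl⟩ := Finset.card_eq_one.mp hcard
      exact Finset.mem_image_of_mem _ (Finset.mem_univ v)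
    · obtain ⟨v, -, rfl⟩ := Finset.mem_image.mp hA
      exact hsingle v

noncomputable def numProperColorings (C : SimpComplex n) (α : Type*) [Fintype α] : ℕ :=
  Fintype.card {c : Fin n → α // C.IsProperColoring c}

section Colorings

variable {α β : Type*}

lemma isProperColoring_comp_iff (C : SimpComplex n) {f : α → β} (hf : f.Injective)
    (c : Fin n → α) : C.IsProperColoring (f ∘ c) ↔ C.IsProperColoring c := by
  simp only [IsProperColoring, Function.comp_apply, hf.ne_iff]

lemma isProperColoring_iff_eq_pointsComplex [Subsingleton α] (C : SimpComplex n)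
    (c : Fin n → α) : C.IsProperColoring c ↔ C = pointsComplex n := by
  refine (forall₂_congr fun x y => imp_congr_right fun _ => ?_).trans
    (eq_pointsComplex_iff C).symm
  simp [Subsingleton.elim (c x) (c y)]

lemma isProperColoring_prod_bool_iff (C : SimpComplex n) (c : Fin n → α × Bool) :
    C.IsProperColoring c ↔
      (C.monochromatic {v | (c v).2}).IsProperColoring (Prod.fst ∘ c) := by
  refine forall₂_congr fun x y => imp_congr_right fun _ => ?_
  simp only [pair_mem_monochromatic_iff, Finset.mem_filter, Finset.mem_univ, true_and,
    Function.comp_apply, ne_eq, Prod.ext_iff, Bool.coe_iff_coe]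
  tauto

variable [Fintype α] [Fintype β]

lemma numProperColorings_congr (C : SimpComplex n) (e : α ≃ β) :
    C.numProperColorings α = C.numProperColorings β :=
  Fintype.card_congr <| ((Equiv.refl (Fin n)).arrowCongr e).subtypeEquiv fun c =>
    (isProperColoring_comp_iff C e.injective c).symm

lemma numProperColorings_of_unique [Unique α] (C : SimpComplex n) :
    C.numProperColorings α = if C = pointsComplex n then 1 else 0 := by
  simp only [numProperColorings, isProperColoring_iff_eq_pointsComplex]
  split_ifs with h <;> simp [h]

def splitLastColor : (Fin n → α × Bool) ≃ Finset (Fin n) × (Fin n → α) where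
  toFun c := (({v | (c v).2} : Finset (Fin n)), Prod.fst ∘ c)
  invFun p v := (p.2 v, decide (v ∈ p.1))
  left_inv c := by funext v; simp
  right_inv p := by ext <;> simp

lemma numProperColorings_prod_bool (C : SimpComplex n) :
    C.numProperColorings (α × Bool) =
      ∑ S : Finset (Fin n), (C.monochromatic S).numProperColorings α := by
  refine (Fintype.card_congr ?_).trans Fintype.card_sigma
  exact
    (splitLastColor.subtypeEquiv (isProperColoring_prod_bool_iff C)).trans
      (Equiv.subtypeProdEquivSigmaSubtype fun S c => (C.monochromatic S).IsProperColoring c)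

end Colorings

end SimpComplex

open SimpComplex

section Chain

variable {n : ℕ}

lemma simpComplexMatrix_apply (C C' : SimpComplex n) :
    simpComplexMatrix n C C' =
      ((Finset.univ.filter fun S => C.monochromatic S = C').card : ℚ) / 2 ^ n := by
  rw [simpComplexMatrix, Matrix.of_apply]
  congr 4 with S
  exact ⟨fun h => Subtype.ext h.symm, fun h => congrArg Subtype.val h.symm⟩

lemma simpComplexMatrix_pow_succ_apply (k : ℕ) (C D : SimpComplex n) :
    (simpComplexMatrix n ^ (k + 1)) C D =
      (2 ^ n)⁻¹ * ∑ S : Finset (Fin n), (simpComplexMatrix n ^ k) (C.monochromatic S) D := by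
  rw [pow_succ', Matrix.mul_apply, Finset.mul_sum,
    ← Finset.sum_fiberwise Finset.univ fun S => C.monochromatic S]
  refine Finset.sum_congr rfl fun C' _ => ?_
  rw [Finset.sum_congr rfl fun S hS => by rw [(Finset.mem_filter.mp hS).2], Finset.sum_const,
    nsmul_eq_mul, simpComplexMatrix_apply]
  ring

theorem simpComplexMatrix_pow_apply_pointsComplex (k : ℕ) (C : SimpComplex n) :
    (simpComplexMatrix n ^ k) C (pointsComplex n) =
      (2 ^ (n * k))⁻¹ * C.numProperColorings (Fin (2 ^ k)) := by
  induction k generalizing C with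
  | zero =>
    rw [pow_zero, Matrix.one_apply,
      numProperColorings_congr C (Fintype.equivOfCardEq (by simp) : Fin (2 ^ 0) ≃ Unit),
      numProperColorings_of_unique]
    split_ifs <;> simp
  | succ k ih =>
    rw [simpComplexMatrix_pow_succ_apply, numProperColorings_congr C
      (Fintype.equivOfCardEq (by simp [pow_succ]) : Fin (2 ^ (k + 1)) ≃ Fin (2 ^ k) × Bool),
      numProperColorings_prod_bool]
    simp only [ih, ← Finset.mul_sum, Nat.cast_sum]
    ring

end Chain

theorem simpComplex_absorption_chromatic_general (n : ℕ) (C0 : SimpComplex n)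
    (k : ℕ) :
    (simpComplexMatrix n ^ k) C0 (pointsComplex n) =
      ((2 : ℚ) ^ (n * k))⁻¹ *
        ((Finset.univ.filter fun c : Fin n → Fin (2 ^ k) =>
            ∀ x y : Fin n, x ≠ y → ({x, y} : Finset (Fin n)) ∈ C0.1 →
              c x ≠ c y).card : ℚ) := by
  rw [simpComplexMatrix_pow_apply_pointsComplex, numProperColorings, Fintype.card_subtype]
  -- the two filters differ only in their `Decidable` instances
  congr

/-- The `k`-step absorption probability of the vertex-coloring chain on simplicial
complexes equals the number of proper `2^k`-colorings of the 1-skeleton divided by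
`2^{nk}` (the chromatic polynomial of the 1-skeleton evaluated at `2^k`, over
`2^{nk}`). -/
theorem simpComplex_absorption_chromatic (n : ℕ) (hn : 1 ≤ n) (C0 : SimpComplex n)
    (k : ℕ) :
    (simpComplexMatrix n ^ k) C0 (pointsComplex n) =
      ((2 : ℚ) ^ (n * k))⁻¹ *
        ((Finset.univ.filter fun c : Fin n → Fin (2 ^ k) =>
            ∀ x y : Fin n, x ≠ y → ({x, y} : Finset (Fin n)) ∈ C0.1 →
              c x ≠ c y).card : ℚ) :=
  simpComplex_absorption_chromatic_general n C0 k
end
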